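/- arXiv:math/0011083 — 12 statements merged into one kernel-verified Lean document; each statement's English description precedes it below -/
import Mathlib

section
/- Let L be a complete lattice in which every element is a supremum of compact elements, and let S be the set of compact elements of L (which is closed under finite joins and contains the least element of L, hence is a join-semilattice with least element under the induced order). Then the map sending x ∈ L to {s ∈ S : s ≤ x} is an order-isomorphism from L onto the set of ideals of S ordered by inclusion. -/
/-- The December 2024 Mathlib definition of a compact element of a complete lattice
(Mathlib now names a different, directed-supremum definition `IsCompactElement`). -/
def CompleteLattice.IsCompactElement {α : Type*} [CompleteLattice α] (k : α) :=
  ∀ s : Set α, k ≤ sSup s → ∃ t : Finset α, ↑t ⊆ s ∧ k ≤ t.sup id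

/-- An ideal of the join-semilattice `S` of compact elements of `L`: a nonempty
subset of the set of compact elements which is a lower subset within the compact
elements and is closed under finite joins. -/
def IsCompactIdeal (L : Type*) [CompleteLattice L] (I : Set L) : Prop :=
  (∀ a ∈ I, CompleteLattice.IsCompactElement a) ∧ I.Nonempty ∧
    (∀ a : L, CompleteLattice.IsCompactElement a → ∀ b ∈ I, a ≤ b → a ∈ I) ∧
    (∀ a ∈ I, ∀ b ∈ I, a ⊔ b ∈ I)


/-!
In a compactly generated lattice an element is the join of the compact elements below it, so
`x ↦ {compact a ≤ x}` reflects the order. It is onto the ideals because an ideal `I` is directed: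
a compact element below `sSup I` already lies below some member of `I`, hence belongs to `I`.
-/

theorem CompleteLattice.isCompactElement_iff_isCompactElement {α : Type*} [CompleteLattice α]
    {k : α} : CompleteLattice.IsCompactElement k ↔ _root_.IsCompactElement k :=
  (CompleteLattice.isCompactElement_iff_exists_le_sSup_of_le_sSup _ k).symm

section CompactsBelow

variable {L : Type*} [CompleteLattice L]

def compactsBelow (x : L) : Set L :=
  {a | CompleteLattice.IsCompactElement a ∧ a ≤ x}

theorem compactsBelow_eq (x : L) : compactsBelow x = {a | IsCompactElement a ∧ a ≤ x} := by
  simp only [compactsBelow, CompleteLattice.isCompactElement_iff_isCompactElement]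

theorem isCompactElement_sup {a b : L} (ha : IsCompactElement a) (hb : IsCompactElement b) :
    IsCompactElement (a ⊔ b) := by
  classical
  simpa using CompleteLattice.isCompactElement_finsetSup (f := id) {a, b} (by simp [ha, hb])

theorem isCompactIdeal_compactsBelow (x : L) : IsCompactIdeal L (compactsBelow x) := by
  simp only [IsCompactIdeal, compactsBelow_eq, CompleteLattice.isCompactElement_iff_isCompactElement]
  refine ⟨fun a ha => ha.1, ⟨⊥, ?_, bot_le⟩, fun a ha b hb hab => ⟨ha, hab.trans hb.2⟩,
    fun a ha b hb => ⟨isCompactElement_sup ha.1 hb.1, sup_le ha.2 hb.2⟩⟩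
  simpa using CompleteLattice.isCompactElement_finsetSup (f := id) (∅ : Finset L) (by simp)

theorem compactsBelow_subset_compactsBelow [IsCompactlyGenerated L] {x y : L} :
    compactsBelow x ⊆ compactsBelow y ↔ x ≤ y := by
  simp only [compactsBelow_eq, le_iff_compact_le_imp (a := x), Set.ofPred_subset_ofPred, and_imp]
  exact ⟨fun h c hc hcx => (h c hc hcx).2, fun h c hc hcx => ⟨hc, h c hc hcx⟩⟩

theorem IsCompactIdeal.directedOn {I : Set L} (hI : IsCompactIdeal L I) :
    DirectedOn (· ≤ ·) I :=
  SupClosed.directedOn fun _ ha _ hb => hI.2.2.2 _ ha _ hb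

theorem IsCompactIdeal.compactsBelow_sSup {I : Set L} (hI : IsCompactIdeal L I) :
    compactsBelow (sSup I) = I := by
  refine Set.Subset.antisymm (fun a ⟨ha, haI⟩ => ?_) fun a ha => ⟨hI.1 a ha, le_sSup ha⟩
  obtain ⟨b, hb, hab⟩ := (CompleteLattice.isCompactElement_iff_le_of_directed_sSup_le _ a).1
    (CompleteLattice.isCompactElement_iff_isCompactElement.1 ha) I hI.2.1 hI.directedOn haI
  exact hI.2.2.1 a ha b hb hab

end CompactsBelow

/-- If every element of the complete lattice `L` is a supremum of compact elements,
then `x ↦ {s compact : s ≤ x}` is an order-isomorphism from `L` onto the set of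
ideals of the semilattice of compact elements, ordered by inclusion. -/
theorem stmt0 (L : Type*) [CompleteLattice L]
    (hgen : ∀ x : L, ∃ s : Set L,
      (∀ a ∈ s, CompleteLattice.IsCompactElement a) ∧ x = sSup s) :
    ∃ e : L ≃o {I : Set L // IsCompactIdeal L I},
      ∀ x : L, (e x : Set L) = {a : L | CompleteLattice.IsCompactElement a ∧ a ≤ x} := by
  have : IsCompactlyGenerated L := ⟨fun x => by
    obtain ⟨s, hs, rfl⟩ := hgen x
    exact ⟨s, fun a ha => CompleteLattice.isCompactElement_iff_isCompactElement.1 (hs a ha), rfl⟩⟩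
  let f : L ↪o {I : Set L // IsCompactIdeal L I} :=
    OrderEmbedding.ofMapLEIff (fun x => ⟨compactsBelow x, isCompactIdeal_compactsBelow x⟩)
      fun _ _ => compactsBelow_subset_compactsBelow
  exact ⟨OrderIso.ofSurjective f fun I => ⟨sSup I.1, Subtype.ext I.2.compactsBelow_sSup⟩,
    fun _ => rfl⟩
end

section
/- Let M be a commutative monoid satisfying the Riesz decomposition property. Then the maximal semilattice quotient ∇(M) = M/≍ is a distributive join-semilattice: for all a, b₀, b₁ ∈ M with [a] ≤ [b₀] ⊔ [b₁] in ∇(M), there exist a₀, a₁ ∈ M with [a] = [a₀] ⊔ [a₁], [a₀] ≤ [b₀] and [a₁] ≤ [b₁]. -/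
/-- `x ∝ y` : `x ≤ n • y` in the algebraic preorder of `M`, for some `n ≥ 1`. -/
def Propto {M : Type*} [AddCommMonoid M] (x y : M) : Prop :=
  ∃ n : ℕ, 1 ≤ n ∧ ∃ z : M, x + z = n • y

/-- `x ≍ y` : `x ∝ y` and `y ∝ x`. -/
def Asymp {M : Type*} [AddCommMonoid M] (x y : M) : Prop :=
  Propto x y ∧ Propto y x

/-- If a commutative monoid `M` satisfies the Riesz decomposition property, then its
maximal semilattice quotient `∇(M) = M/≍` is a distributive join-semilattice; stated
via representatives using `[x] ⊔ [y] = [x + y]` and `[x] ≤ [y] ↔ x ∝ y`. -/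
theorem stmt3 (M : Type*) [AddCommMonoid M]
    (hriesz : ∀ a b₀ b₁ : M, (∃ z, a + z = b₀ + b₁) →
      ∃ a₀ a₁ : M, (∃ z, a₀ + z = b₀) ∧ (∃ z, a₁ + z = b₁) ∧ a = a₀ + a₁) :
    ∀ a b₀ b₁ : M, Propto a (b₀ + b₁) →
      ∃ a₀ a₁ : M, Asymp a (a₀ + a₁) ∧ Propto a₀ b₀ ∧ Propto a₁ b₁ := by
  rintro a b₀ b₁ ⟨n, hn, z, hz⟩
  obtain ⟨a₀, a₁, ⟨z₀, h₀⟩, ⟨z₁, h₁⟩, ha⟩ := hriesz a (n • b₀) (n • b₁)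
    ⟨z, by rw [hz, smul_add]⟩
  exact ⟨a₀, a₁, ⟨⟨1, le_refl 1, 0, by simp [ha]⟩, ⟨1, le_refl 1, 0, by simp [ha]⟩⟩,
    ⟨n, hn, z₀, h₀⟩, ⟨n, hn, z₁, h₁⟩⟩
end

section
/- Let G be a partially ordered abelian group. Then the map I ↦ I ∩ G⁺ is an order-isomorphism from the set of ideals of G ordered by inclusion onto the set of monoid ideals of the commutative monoid G⁺ ordered by inclusion, with inverse given by J ↦ {x − y : x, y ∈ J}. -/
/-- An ideal of a partially ordered abelian group: a subgroup which is directed and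
convex. -/
def IsPogIdeal {G : Type*} [AddCommGroup G] [PartialOrder G] (I : Set G) : Prop :=
  (0 : G) ∈ I ∧ (∀ x ∈ I, ∀ y ∈ I, x + y ∈ I) ∧ (∀ x ∈ I, -x ∈ I) ∧
    (∀ x ∈ I, ∀ y ∈ I, ∃ z ∈ I, x ≤ z ∧ y ≤ z) ∧
    (∀ x ∈ I, ∀ z ∈ I, ∀ y : G, x ≤ y → y ≤ z → y ∈ I)

/-- A monoid ideal of the commutative monoid `G⁺`: a nonempty subset `J ⊆ G⁺` such
that for all `x, y ∈ G⁺`, `x + y ∈ J ↔ x ∈ J ∧ y ∈ J`. -/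
def IsConeIdeal {G : Type*} [AddCommGroup G] [PartialOrder G] (J : Set G) : Prop :=
  J ⊆ {x : G | 0 ≤ x} ∧ J.Nonempty ∧
    ∀ x y : G, 0 ≤ x → 0 ≤ y → (x + y ∈ J ↔ x ∈ J ∧ y ∈ J)

/-!
A monoid ideal `J` of `G⁺` is exactly a submonoid of `G⁺` that is hereditary (`0 ≤ a ≤ b ∈ J`
implies `a ∈ J`). Hereditarity makes `J - J` convex: if `x - y ≤ w ≤ u - v` with
`x, y, u, v ∈ J`, then `0 ≤ x + v ≤ w + v + y ≤ u + y ∈ J`, so `w = (w + v + y) - (v + y)`.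
Conversely an ideal `I` is recovered from `I ∩ G⁺`, because directedness gives `z ∈ I` with
`z ≥ a, 0` for each `a ∈ I`, and then `a = z - (z - a)` is a difference of positive elements.
-/

namespace IsConeIdeal

variable {G : Type*} [AddCommGroup G] [PartialOrder G] {J : Set G}

theorem nonneg (hJ : IsConeIdeal J) {a : G} (ha : a ∈ J) : 0 ≤ a := hJ.1 ha

theorem zero_mem (hJ : IsConeIdeal J) : (0 : G) ∈ J := by
  obtain ⟨a, ha⟩ := hJ.2.1
  exact ((hJ.2.2 a 0 (hJ.nonneg ha) le_rfl).mp (by rwa [add_zero])).2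

theorem add_mem (hJ : IsConeIdeal J) {a b : G} (ha : a ∈ J) (hb : b ∈ J) : a + b ∈ J :=
  (hJ.2.2 a b (hJ.nonneg ha) (hJ.nonneg hb)).mpr ⟨ha, hb⟩

variable [AddLeftMono G]

theorem mem_of_le (hJ : IsConeIdeal J) {a b : G} (ha : 0 ≤ a) (hab : a ≤ b) (hb : b ∈ J) :
    a ∈ J :=
  ((hJ.2.2 a (b - a) ha (sub_nonneg.mpr hab)).mp (by rwa [add_sub_cancel])).1

theorem isPogIdeal_differences (hJ : IsConeIdeal J) :
    IsPogIdeal {a : G | ∃ x ∈ J, ∃ y ∈ J, a = x - y} := by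
  refine ⟨⟨0, hJ.zero_mem, 0, hJ.zero_mem, (sub_zero 0).symm⟩, ?_, ?_, ?_, ?_⟩
  · rintro _ ⟨x, hx, y, hy, rfl⟩ _ ⟨u, hu, v, hv, rfl⟩
    exact ⟨x + u, hJ.add_mem hx hu, y + v, hJ.add_mem hy hv, by abel⟩
  · rintro _ ⟨x, hx, y, hy, rfl⟩
    exact ⟨y, hy, x, hx, neg_sub x y⟩
  · rintro _ ⟨x, hx, y, hy, rfl⟩ _ ⟨u, hu, v, hv, rfl⟩
    refine ⟨x + u, ⟨x + u, hJ.add_mem hx hu, 0, hJ.zero_mem, (sub_zero _).symm⟩, ?_, ?_⟩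
    · calc x - y ≤ x := sub_le_self x (hJ.nonneg hy)
        _ ≤ x + u := le_add_of_nonneg_right (hJ.nonneg hu)
    · calc u - v ≤ u := sub_le_self u (hJ.nonneg hv)
        _ ≤ x + u := le_add_of_nonneg_left (hJ.nonneg hx)
  · rintro _ ⟨x, hx, y, hy, rfl⟩ _ ⟨u, hu, v, hv, rfl⟩ w hxw hwu
    have hw : w + (v + y) ∈ J := by
      refine hJ.mem_of_le ?_ ?_ (hJ.add_mem hu hy)
      · calc (0 : G) ≤ x + v := add_nonneg (hJ.nonneg hx) (hJ.nonneg hv)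
          _ = (x - y) + (v + y) := by abel
          _ ≤ w + (v + y) := add_le_add_left hxw _
      · calc w + (v + y) ≤ (u - v) + (v + y) := add_le_add_left hwu _
          _ = u + y := by abel
    exact ⟨w + (v + y), hw, v + y, hJ.add_mem hv hy, by abel⟩

theorem differences_inter_nonneg (hJ : IsConeIdeal J) :
    {a : G | ∃ x ∈ J, ∃ y ∈ J, a = x - y} ∩ {x : G | 0 ≤ x} = J := by
  ext a
  constructor
  · rintro ⟨⟨x, hx, y, hy, rfl⟩, ha⟩
    exact hJ.mem_of_le ha (sub_le_self x (hJ.nonneg hy)) hx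
  · intro ha
    exact ⟨⟨a, ha, 0, hJ.zero_mem, (sub_zero a).symm⟩, hJ.nonneg ha⟩

end IsConeIdeal

namespace IsPogIdeal

variable {G : Type*} [AddCommGroup G] [PartialOrder G] {I : Set G}

theorem sub_mem (hI : IsPogIdeal I) {a b : G} (ha : a ∈ I) (hb : b ∈ I) : a - b ∈ I :=
  sub_eq_add_neg a b ▸ hI.2.1 a ha (-b) (hI.2.2.1 b hb)

variable [AddLeftMono G]

theorem differences_inter_nonneg (hI : IsPogIdeal I) :
    {a : G | ∃ x ∈ I ∩ {x : G | 0 ≤ x}, ∃ y ∈ I ∩ {x : G | 0 ≤ x}, a = x - y} = I := by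
  ext a
  constructor
  · rintro ⟨x, ⟨hx, -⟩, y, ⟨hy, -⟩, rfl⟩
    exact hI.sub_mem hx hy
  · intro ha
    obtain ⟨z, hz, haz, hz0⟩ := hI.2.2.2.1 a ha 0 hI.1
    exact ⟨z, ⟨hz, hz0⟩, z - a, ⟨hI.sub_mem hz ha, sub_nonneg.mpr haz⟩, (sub_sub_cancel z a).symm⟩

theorem isConeIdeal_inter_nonneg (hI : IsPogIdeal I) : IsConeIdeal (I ∩ {x : G | 0 ≤ x}) := by
  refine ⟨fun x hx => hx.2, ⟨0, hI.1, le_rfl⟩, fun x y hx hy => ⟨?_, ?_⟩⟩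
  · rintro ⟨hxy, -⟩
    have hconv := hI.2.2.2.2 0 hI.1 (x + y) hxy
    exact ⟨⟨hconv x hx (le_add_of_nonneg_right hy), hx⟩,
      ⟨hconv y hy (le_add_of_nonneg_left hx), hy⟩⟩
  · rintro ⟨⟨hxI, -⟩, ⟨hyI, -⟩⟩
    exact ⟨hI.2.1 x hxI y hyI, add_nonneg hx hy⟩

end IsPogIdeal

/-- For a partially ordered abelian group `G`, the map `I ↦ I ∩ G⁺` is an order
isomorphism from the ideals of `G` onto the monoid ideals of `G⁺`, with inverse
`J ↦ {x - y : x, y ∈ J}`. -/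
theorem stmt4 (G : Type*) [AddCommGroup G] [PartialOrder G]
    [CovariantClass G G (· + ·) (· ≤ ·)] :
    ∃ e : {I : Set G // IsPogIdeal I} ≃o {J : Set G // IsConeIdeal J},
      (∀ I : {I : Set G // IsPogIdeal I}, (e I : Set G) = I.1 ∩ {x : G | 0 ≤ x}) ∧
      (∀ J : {J : Set G // IsConeIdeal J},
        (e.symm J : Set G) = {a : G | ∃ x ∈ J.1, ∃ y ∈ J.1, a = x - y}) := by
  let e : {I : Set G // IsPogIdeal I} ≃ {J : Set G // IsConeIdeal J} :=
    { toFun := fun I => ⟨I.1 ∩ {x : G | 0 ≤ x}, I.2.isConeIdeal_inter_nonneg⟩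
      invFun := fun J => ⟨{a : G | ∃ x ∈ J.1, ∃ y ∈ J.1, a = x - y}, J.2.isPogIdeal_differences⟩
      left_inv := fun I => Subtype.ext I.2.differences_inter_nonneg
      right_inv := fun J => Subtype.ext J.2.differences_inter_nonneg }
  have e_mono : Monotone e := fun _ _ h => Set.inter_subset_inter_left _ h
  have e_symm_mono : Monotone e.symm := by
    rintro J J' h _ ⟨x, hx, y, hy, rfl⟩
    exact ⟨x, h hx, y, h hy, rfl⟩
  exact ⟨e.toOrderIso e_mono e_symm_mono, fun _ => rfl, fun _ => rfl⟩
end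

section
/- Let M be a commutative monoid satisfying the Riesz decomposition property. Then: (1) for any two ideals I, J of M the set I + J = {x + y : x ∈ I, y ∈ J} is again an ideal and is the supremum of I and J in Id M; (2) the lattice Id M is distributive, i.e. (I + J) ∩ K = (I ∩ K) + (J ∩ K) for all ideals I, J, K; and (3) the assignment sending the ≍-class [x] of x ∈ M to the principal ideal {z ∈ M : z ∝ x} is a well-defined isomorphism of join-semilattices from the maximal semilattice quotient ∇(M) onto the semilattice of compact elements of Id M. -/
/-- An ideal of a commutative monoid `M`: a nonempty subset `I` such that
`x + y ∈ I ↔ x ∈ I ∧ y ∈ I`. -/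
def IsMonIdeal {M : Type*} [AddCommMonoid M] (I : Set M) : Prop :=
  I.Nonempty ∧ ∀ x y : M, x + y ∈ I ↔ x ∈ I ∧ y ∈ I

theorem IsMonIdeal.zero_mem {M : Type*} [AddCommMonoid M] {I : Set M}
    (h : IsMonIdeal I) : (0 : M) ∈ I := by
  obtain ⟨x, hx⟩ := h.1
  exact ((h.2 x 0).mp (by simpa using hx)).2

/-- `Id M`, the collection of all ideals of `M`, ordered by inclusion. -/
abbrev MonIdeal (M : Type*) [AddCommMonoid M] := {I : Set M // IsMonIdeal I}

instance (M : Type*) [AddCommMonoid M] : InfSet (MonIdeal M) :=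
  ⟨fun s => ⟨{x | ∀ I ∈ s, x ∈ (I : MonIdeal M).1},
    ⟨⟨0, fun I _ => I.2.zero_mem⟩, fun x y => by
      constructor
      · intro h
        exact ⟨fun I hI => ((I.2.2 x y).mp (h I hI)).1,
               fun I hI => ((I.2.2 x y).mp (h I hI)).2⟩
      · rintro ⟨hx, hy⟩ I hI
        exact (I.2.2 x y).mpr ⟨hx I hI, hy I hI⟩⟩⟩⟩

/-- `Id M` is a complete lattice, with infima given by intersections. -/
instance (M : Type*) [AddCommMonoid M] : CompleteLattice (MonIdeal M) :=
  completeLatticeOfInf _ (fun s =>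
    ⟨fun I hI x hx => hx I hI, fun J hJ x hx I hI => hJ hI hx⟩)

/-!
Riesz decomposition is exactly what makes the complex sum `I + J` of two ideals downward
closed, so `I + J` is an ideal and hence `I ⊔ J`; distributivity follows because membership
of `x + y` in `K` forces `x, y ∈ K`. The principal ideal of `x + y` is the join of those of
`x` and `y` by decomposing `z ≤ n • x + n • y`, and `x ∝ y` says precisely that the principal
ideal of `x` lies below that of `y`. Since directed unions of ideals are ideals, principal
ideals are compact; conversely every ideal is the directed union of the principal ideals of
its elements, so a compact ideal is principal.
-/

open Pointwise

def HasRieszDecomposition (M : Type*) [AddCommMonoid M] : Prop :=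
  ∀ a b₀ b₁ : M, (∃ z, a + z = b₀ + b₁) →
    ∃ a₀ a₁ : M, (∃ z, a₀ + z = b₀) ∧ (∃ z, a₁ + z = b₁) ∧ a = a₀ + a₁

section

variable {M : Type*} [AddCommMonoid M]

namespace IsMonIdeal

variable {I J : Set M} {x y : M}

theorem add_mem (h : IsMonIdeal I) (hx : x ∈ I) (hy : y ∈ I) : x + y ∈ I :=
  (h.2 x y).2 ⟨hx, hy⟩

theorem of_add_mem_left (h : IsMonIdeal I) (hxy : x + y ∈ I) : x ∈ I :=
  ((h.2 x y).1 hxy).1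

theorem of_add_mem_right (h : IsMonIdeal I) (hxy : x + y ∈ I) : y ∈ I :=
  ((h.2 x y).1 hxy).2

theorem nsmul_mem (h : IsMonIdeal I) (hx : x ∈ I) (n : ℕ) : n • x ∈ I := by
  induction n with
  | zero => simpa using h.zero_mem
  | succ n ih => rw [succ_nsmul]; exact h.add_mem ih hx

theorem mem_of_propto (h : IsMonIdeal I) (hy : y ∈ I) (hxy : Propto x y) : x ∈ I := by
  obtain ⟨n, -, z, hz⟩ := hxy
  exact h.of_add_mem_left (hz ▸ h.nsmul_mem hy n)

theorem add (hM : HasRieszDecomposition M) (hI : IsMonIdeal I) (hJ : IsMonIdeal J) :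
    IsMonIdeal (I + J) := by
  have mem_of_le : ∀ {a b : M}, a + b ∈ I + J → a ∈ I + J := by
    rintro a b ⟨x, hx, y, hy, hxy⟩
    obtain ⟨a₀, a₁, ⟨z₀, hz₀⟩, ⟨z₁, hz₁⟩, rfl⟩ := hM a x y ⟨b, hxy.symm⟩
    exact ⟨a₀, hI.of_add_mem_left (hz₀ ▸ hx), a₁, hJ.of_add_mem_left (hz₁ ▸ hy), rfl⟩
  refine ⟨⟨0, 0, hI.zero_mem, 0, hJ.zero_mem, zero_add 0⟩, fun a b => ⟨fun hab => ?_, ?_⟩⟩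
  · exact ⟨mem_of_le hab, mem_of_le (b := a) (add_comm a b ▸ hab)⟩
  · rintro ⟨⟨x₁, hx₁, y₁, hy₁, rfl⟩, ⟨x₂, hx₂, y₂, hy₂, rfl⟩⟩
    exact ⟨x₁ + x₂, hI.add_mem hx₁ hx₂, y₁ + y₂, hJ.add_mem hy₁ hy₂, add_add_add_comm ..⟩

theorem sUnion_of_directedOn {S : Set (Set M)} (hS : ∀ I ∈ S, IsMonIdeal I) (hne : S.Nonempty)
    (hdir : DirectedOn (· ⊆ ·) S) : IsMonIdeal (⋃₀ S) := by
  obtain ⟨I₀, hI₀⟩ := hne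
  refine ⟨⟨0, I₀, hI₀, (hS I₀ hI₀).zero_mem⟩, fun x y => ⟨?_, ?_⟩⟩
  · rintro ⟨I, hI, hxy⟩
    exact ⟨⟨I, hI, (hS I hI).of_add_mem_left hxy⟩, ⟨I, hI, (hS I hI).of_add_mem_right hxy⟩⟩
  · rintro ⟨⟨I, hI, hx⟩, ⟨J, hJ, hy⟩⟩
    obtain ⟨K, hK, hIK, hJK⟩ := hdir I hI J hJ
    exact ⟨K, hK, (hS K hK).add_mem (hIK hx) (hJK hy)⟩

end IsMonIdeal

theorem isMonIdeal_setOf_propto (x : M) : IsMonIdeal {z : M | Propto z x} := by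
  refine ⟨⟨0, 1, le_rfl, x, by simp⟩, fun a b => ⟨?_, ?_⟩⟩
  · rintro ⟨n, hn, w, hw⟩
    exact ⟨⟨n, hn, b + w, by rw [← add_assoc, hw]⟩,
      ⟨n, hn, a + w, by rw [← add_assoc, add_comm b, hw]⟩⟩
  · rintro ⟨⟨n, hn, u, hu⟩, ⟨m, -, v, hv⟩⟩
    exact ⟨n + m, by omega, u + v, by rw [add_nsmul, ← hu, ← hv, add_add_add_comm]⟩

namespace MonIdeal

variable {I : MonIdeal M} {x y : M}

theorem coe_inf (I J : MonIdeal M) : (I ⊓ J).1 = I.1 ∩ J.1 := by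
  ext x
  show (∀ K ∈ ({I, J} : Set (MonIdeal M)), x ∈ K.1) ↔ _
  simp

theorem coe_sup (hM : HasRieszDecomposition M) (I J : MonIdeal M) :
    (I ⊔ J).1 = I.1 + J.1 := by
  let IJ : MonIdeal M := ⟨I.1 + J.1, I.2.add hM J.2⟩
  refine subset_antisymm (?_ : I ⊔ J ≤ IJ) ?_
  · exact sup_le (fun x hx => ⟨x, hx, 0, J.2.zero_mem, add_zero x⟩)
      (fun y hy => ⟨0, I.2.zero_mem, y, hy, zero_add y⟩)
  · rintro _ ⟨x, hx, y, hy, rfl⟩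
    exact (I ⊔ J).2.add_mem (le_sup_left (b := J) hx) (le_sup_right (a := I) hy)

theorem inf_sup_right (hM : HasRieszDecomposition M) (I J K : MonIdeal M) :
    (I ⊔ J) ⊓ K = I ⊓ K ⊔ J ⊓ K := by
  refine le_antisymm (fun z hz => ?_) (sup_le (inf_le_inf_right K le_sup_left)
    (inf_le_inf_right K le_sup_right))
  rw [coe_inf, coe_sup hM] at hz
  obtain ⟨⟨x, hx, y, hy, rfl⟩, hxyK⟩ := hz
  rw [coe_sup hM, coe_inf, coe_inf]
  exact ⟨x, ⟨hx, K.2.of_add_mem_left hxyK⟩, y, ⟨hy, K.2.of_add_mem_right hxyK⟩, rfl⟩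

theorem coe_sSup_of_directedOn {S : Set (MonIdeal M)} (hne : S.Nonempty)
    (hdir : DirectedOn (· ≤ ·) S) : (sSup S).1 = ⋃ I ∈ S, I.1 := by
  have hU : IsMonIdeal (⋃ I ∈ S, I.1) := by
    rw [← Set.sUnion_image]
    refine IsMonIdeal.sUnion_of_directedOn (by rintro _ ⟨I, -, rfl⟩; exact I.2)
      (hne.image _) (directedOn_image.2 hdir)
  refine subset_antisymm (?_ : sSup S ≤ ⟨_, hU⟩) (Set.iUnion₂_subset fun I hI => le_sSup hI)
  exact sSup_le fun I hI => Set.subset_biUnion_of_mem (u := fun I : MonIdeal M => I.1) hI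

def principal (x : M) : MonIdeal M := ⟨{z : M | Propto z x}, isMonIdeal_setOf_propto x⟩

theorem mem_principal_self (x : M) : x ∈ (principal x).1 := ⟨1, le_rfl, 0, by simp⟩

theorem principal_le_iff : principal x ≤ I ↔ x ∈ I.1 :=
  ⟨fun h => h (mem_principal_self x), fun hx _ hz => I.2.mem_of_propto hx hz⟩

theorem principal_eq_principal_iff : principal x = principal y ↔ Asymp x y := by
  rw [le_antisymm_iff, principal_le_iff, principal_le_iff]
  rfl

theorem principal_le_principal_add_right (x y : M) : principal x ≤ principal (x + y) :=
  principal_le_iff.2 ⟨1, le_rfl, y, by simp⟩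

theorem principal_le_principal_add_left (x y : M) : principal y ≤ principal (x + y) :=
  add_comm y x ▸ principal_le_principal_add_right y x

theorem principal_add (hM : HasRieszDecomposition M) (x y : M) :
    principal (x + y) = principal x ⊔ principal y := by
  refine le_antisymm (fun z ⟨n, hn, w, hw⟩ => ?_)
    (sup_le (principal_le_principal_add_right x y) (principal_le_principal_add_left x y))
  rw [smul_add] at hw
  obtain ⟨z₀, z₁, ⟨u, hu⟩, ⟨v, hv⟩, rfl⟩ := hM z (n • x) (n • y) ⟨w, hw⟩
  exact (principal x ⊔ principal y).2.add_mem
    (le_sup_left (b := principal y) ⟨n, hn, u, hu⟩)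
    (le_sup_right (a := principal x) ⟨n, hn, v, hv⟩)

theorem isCompactElement_principal (x : M) : IsCompactElement (principal x) := by
  rw [CompleteLattice.isCompactElement_iff_le_of_directed_sSup_le]
  intro S hne hdir hle
  have hx : x ∈ (sSup S).1 := principal_le_iff.1 hle
  rw [coe_sSup_of_directedOn hne hdir, Set.mem_iUnion₂] at hx
  obtain ⟨J, hJ, hxJ⟩ := hx
  exact ⟨J, hJ, principal_le_iff.2 hxJ⟩

theorem exists_eq_principal_of_isCompactElement (hI : IsCompactElement I) :
    ∃ x, I = principal x := by
  rw [CompleteLattice.isCompactElement_iff_le_of_directed_sSup_le] at hI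
  have hdir : DirectedOn (· ≤ ·) (principal '' I.1) := by
    rintro _ ⟨a, ha, rfl⟩ _ ⟨b, hb, rfl⟩
    exact ⟨principal (a + b), ⟨a + b, I.2.add_mem ha hb, rfl⟩,
      principal_le_principal_add_right a b, principal_le_principal_add_left a b⟩
  have hle : I ≤ sSup (principal '' I.1) := fun z hz =>
    le_sSup (Set.mem_image_of_mem principal hz) (mem_principal_self z)
  obtain ⟨_, ⟨x, hx, rfl⟩, hIx⟩ := hI _ ⟨_, Set.mem_image_of_mem _ I.2.zero_mem⟩ hdir hle
  exact ⟨x, le_antisymm hIx (principal_le_iff.2 hx)⟩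

theorem isCompactElement_iff_exists_eq_principal :
    IsCompactElement I ↔ ∃ x, I = principal x :=
  ⟨exists_eq_principal_of_isCompactElement,
    by rintro ⟨x, rfl⟩; exact isCompactElement_principal x⟩

end MonIdeal

end

/-- If `M` satisfies Riesz decomposition, then: (1) the sum of two ideals is an ideal
and is their supremum in `Id M`; (2) `Id M` is a distributive lattice; (3) the map
`[x] ↦ {z : z ∝ x}` is a well-defined join-semilattice isomorphism from the maximal
semilattice quotient `∇(M)` onto the semilattice of compact elements of `Id M`. -/
theorem stmt6 (M : Type*) [AddCommMonoid M]
    (hriesz : ∀ a b₀ b₁ : M, (∃ z, a + z = b₀ + b₁) →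
      ∃ a₀ a₁ : M, (∃ z, a₀ + z = b₀) ∧ (∃ z, a₁ + z = b₁) ∧ a = a₀ + a₁) :
    (∀ I J : MonIdeal M,
      IsMonIdeal {z : M | ∃ x ∈ I.1, ∃ y ∈ J.1, z = x + y} ∧
      (I ⊔ J).1 = {z : M | ∃ x ∈ I.1, ∃ y ∈ J.1, z = x + y}) ∧
    (∀ I J K : MonIdeal M, (I ⊔ J) ⊓ K = (I ⊓ K) ⊔ (J ⊓ K)) ∧
    ∃ hprinc : ∀ x : M, IsMonIdeal {z : M | Propto z x},
      (∀ x y : M,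
        (⟨{z : M | Propto z x}, hprinc x⟩ : MonIdeal M) = ⟨{z : M | Propto z y}, hprinc y⟩
          ↔ Asymp x y) ∧
      (∀ x y : M,
        (⟨{z : M | Propto z (x + y)}, hprinc (x + y)⟩ : MonIdeal M) =
          (⟨{z : M | Propto z x}, hprinc x⟩ : MonIdeal M) ⊔
            ⟨{z : M | Propto z y}, hprinc y⟩) ∧
      (∀ I : MonIdeal M, IsCompactElement I ↔
        ∃ x : M, I = ⟨{z : M | Propto z x}, hprinc x⟩) := by
  have hsum (I J : MonIdeal M) : {z : M | ∃ x ∈ I.1, ∃ y ∈ J.1, z = x + y} = I.1 + J.1 := by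
    ext z
    simp only [Set.mem_ofPred_eq, Set.mem_add, eq_comm]
  refine ⟨fun I J => hsum I J ▸ ⟨I.2.add hriesz J.2, MonIdeal.coe_sup hriesz I J⟩,
    MonIdeal.inf_sup_right hriesz, isMonIdeal_setOf_propto,
    fun x y => MonIdeal.principal_eq_principal_iff, MonIdeal.principal_add hriesz,
    fun I => MonIdeal.isCompactElement_iff_exists_eq_principal⟩
end

section
/- Let G be an interpolation group. Then the complete lattice Id G of ideals of G is distributive, and the assignment sending the ≍-class [x] of x ∈ G⁺ to the smallest ideal of G containing x is a well-defined isomorphism of join-semilattices from the maximal semilattice quotient ∇(G⁺) onto the semilattice of those ideals of G possessing an order-unit (equivalently, the compact elements of Id G). -/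
/-- The smallest ideal of `G` containing `x` (the intersection of all ideals
containing `x`). -/
def genIdeal {G : Type*} [AddCommGroup G] [PartialOrder G] (x : G) : Set G :=
  {z : G | ∀ I : Set G, IsPogIdeal I → x ∈ I → z ∈ I}

/-- `x ∝ y` for elements of the positive cone: `x ≤ n • y` for some `n ≥ 1`. -/
def PropG {G : Type*} [AddCommGroup G] [PartialOrder G] (x y : G) : Prop :=
  ∃ n : ℕ, 1 ≤ n ∧ x ≤ n • y

/-!
An ideal is determined by its positive part, since every element of an ideal `I` lies between
`-w` and `w` for some `w ∈ I⁺`. Conversely, the ideal generated by a submonoid `M ⊆ G⁺` is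
`{z | -a ≤ z ≤ a for some a ∈ M}`; this yields arbitrary joins, and `genIdeal x` for `x ≥ 0`
is generated by the multiples of `x`, so membership of `z ≥ 0` in it is exactly `z ∝ x`.

Interpolation enters twice. It makes `I ∩ J` directed, so that meets are intersections, and it
gives the Riesz decomposition: `0 ≤ z ≤ b + c` with `b, c ≥ 0` splits as `z = b' + c'` with
`0 ≤ b' ≤ b`, `0 ≤ c' ≤ c`. Hence `(J ⊔ K)⁺ = J⁺ + K⁺`, and distributivity can be checked on
positive elements, where it is immediate.

A directed union of ideals is an ideal, so principal ideals are compact; conversely every ideal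
is the directed supremum of the principal ideals of its positive elements, so a compact ideal is
principal, and the principal ideals are exactly those with an order-unit.
-/

def IsInterpolationGroup (G : Type*) [LE G] : Prop :=
  ∀ a₀ a₁ b₀ b₁ : G, a₀ ≤ b₀ → a₀ ≤ b₁ → a₁ ≤ b₀ → a₁ ≤ b₁ →
    ∃ x : G, a₀ ≤ x ∧ a₁ ≤ x ∧ x ≤ b₀ ∧ x ≤ b₁

theorem IsInterpolationGroup.riesz_decomposition {G : Type*} [AddCommGroup G] [PartialOrder G]
    [AddLeftMono G] (hG : IsInterpolationGroup G) {z b c : G} (hz : 0 ≤ z) (hb : 0 ≤ b)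
    (hc : 0 ≤ c) (h : z ≤ b + c) :
    ∃ b' c', 0 ≤ b' ∧ b' ≤ b ∧ 0 ≤ c' ∧ c' ≤ c ∧ z = b' + c' := by
  obtain ⟨v, hv0, hzcv, hvz, hvb⟩ :=
    hG 0 (z - c) z b hz hb (sub_le_self z hc) (sub_le_iff_le_add.mpr h)
  exact ⟨v, z - v, hv0, hvb, sub_nonneg.mpr hvz, sub_le_comm.mp hzcv, by abel⟩

section Ideals

variable {G : Type*} [AddCommGroup G] [PartialOrder G]

namespace IsPogIdeal

variable {I J : Set G}

theorem zero_mem (hI : IsPogIdeal I) : (0 : G) ∈ I := hI.1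

theorem add_mem (hI : IsPogIdeal I) {x y : G} (hx : x ∈ I) (hy : y ∈ I) : x + y ∈ I :=
  hI.2.1 x hx y hy

theorem neg_mem (hI : IsPogIdeal I) {x : G} (hx : x ∈ I) : -x ∈ I := hI.2.2.1 x hx

theorem exists_ge (hI : IsPogIdeal I) {x y : G} (hx : x ∈ I) (hy : y ∈ I) :
    ∃ z ∈ I, x ≤ z ∧ y ≤ z :=
  hI.2.2.2.1 x hx y hy

theorem mem_of_le_of_le (hI : IsPogIdeal I) {x y z : G} (hx : x ∈ I) (hz : z ∈ I)
    (hxy : x ≤ y) (hyz : y ≤ z) : y ∈ I :=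
  hI.2.2.2.2 x hx z hz y hxy hyz

theorem mem_of_nonneg_of_le (hI : IsPogIdeal I) {y z : G} (hy : 0 ≤ y) (hyz : y ≤ z)
    (hz : z ∈ I) : y ∈ I :=
  hI.mem_of_le_of_le hI.zero_mem hz hy hyz

theorem nsmul_mem (hI : IsPogIdeal I) {x : G} (hx : x ∈ I) (n : ℕ) : n • x ∈ I := by
  induction n with
  | zero => simpa using hI.zero_mem
  | succ n ih => simpa [succ_nsmul] using hI.add_mem ih hx

theorem inter (hG : IsInterpolationGroup G) (hI : IsPogIdeal I) (hJ : IsPogIdeal J) :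
    IsPogIdeal (I ∩ J) := by
  refine ⟨⟨hI.zero_mem, hJ.zero_mem⟩, fun x hx y hy => ⟨hI.add_mem hx.1 hy.1, hJ.add_mem hx.2 hy.2⟩,
    fun x hx => ⟨hI.neg_mem hx.1, hJ.neg_mem hx.2⟩, fun x hx y hy => ?_,
    fun x hx z hz y hxy hyz =>
      ⟨hI.mem_of_le_of_le hx.1 hz.1 hxy hyz, hJ.mem_of_le_of_le hx.2 hz.2 hxy hyz⟩⟩
  obtain ⟨s, hs, hxs, hys⟩ := hI.exists_ge hx.1 hy.1
  obtain ⟨t, ht, hxt, hyt⟩ := hJ.exists_ge hx.2 hy.2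
  obtain ⟨u, hxu, hyu, hus, hut⟩ := hG x y s t hxs hxt hys hyt
  exact ⟨u, ⟨hI.mem_of_le_of_le hx.1 hs hxu hus, hJ.mem_of_le_of_le hx.2 ht hxu hut⟩, hxu, hyu⟩

variable [AddLeftMono G]

theorem exists_nonneg_bound (hI : IsPogIdeal I) {z : G} (hz : z ∈ I) :
    ∃ w ∈ I, 0 ≤ w ∧ -w ≤ z ∧ z ≤ w := by
  obtain ⟨w₁, hw₁, hzw₁, hnzw₁⟩ := hI.exists_ge hz (hI.neg_mem hz)
  obtain ⟨w, hw, hw₁w, hw0⟩ := hI.exists_ge hw₁ hI.zero_mem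
  exact ⟨w, hw, hw0, (neg_le_neg_iff.mpr hw₁w).trans (neg_le.mp hnzw₁), hzw₁.trans hw₁w⟩

theorem subset_of_forall_nonneg (hI : IsPogIdeal I) (hJ : IsPogIdeal J)
    (h : ∀ z ∈ I, 0 ≤ z → z ∈ J) : I ⊆ J := by
  intro z hz
  obtain ⟨w, hwI, hw0, hwz, hzw⟩ := hI.exists_nonneg_bound hz
  exact hJ.mem_of_le_of_le (hJ.neg_mem (h w hwI hw0)) (h w hwI hw0) hwz hzw

end IsPogIdeal

def idealSpan (M : AddSubmonoid G) : Set G := {z | ∃ a ∈ M, -a ≤ z ∧ z ≤ a}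

theorem idealSpan_subset {M : AddSubmonoid G} {J : Set G} (hJ : IsPogIdeal J)
    (hMJ : ∀ a ∈ M, a ∈ J) : idealSpan M ⊆ J := by
  rintro z ⟨a, ha, haz, hza⟩
  exact hJ.mem_of_le_of_le (hJ.neg_mem (hMJ a ha)) (hMJ a ha) haz hza

theorem isPogIdeal_idealSpan [AddLeftMono G] {M : AddSubmonoid G} (hM : ∀ a ∈ M, 0 ≤ a) :
    IsPogIdeal (idealSpan M) := by
  refine ⟨⟨0, M.zero_mem, by simp⟩, ?_, ?_, ?_, ?_⟩
  · rintro x ⟨a, ha, hax, hxa⟩ y ⟨b, hb, hby, hyb⟩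
    exact ⟨a + b, M.add_mem ha hb, by rw [neg_add]; exact add_le_add hax hby, add_le_add hxa hyb⟩
  · rintro x ⟨a, ha, hax, hxa⟩
    exact ⟨a, ha, neg_le_neg_iff.mpr hxa, neg_le.mp hax⟩
  · rintro x ⟨a, ha, -, hxa⟩ y ⟨b, hb, -, hyb⟩
    exact ⟨a + b, ⟨a + b, M.add_mem ha hb, neg_le_self (add_nonneg (hM a ha) (hM b hb)), le_rfl⟩,
      hxa.trans (le_add_of_nonneg_right (hM b hb)), hyb.trans (le_add_of_nonneg_left (hM a ha))⟩
  · rintro x ⟨a, ha, hax, -⟩ z ⟨b, hb, -, hzb⟩ y hxy hyz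
    refine ⟨a + b, M.add_mem ha hb, ?_, hyz.trans (hzb.trans (le_add_of_nonneg_left (hM a ha)))⟩
    calc -(a + b) ≤ -a := neg_le_neg_iff.mpr (le_add_of_nonneg_right (hM b hb))
      _ ≤ y := hax.trans hxy

theorem mem_genIdeal_self (x : G) : x ∈ genIdeal x := fun _ _ hx => hx

theorem genIdeal_subset {x : G} {J : Set G} (hJ : IsPogIdeal J) (hx : x ∈ J) :
    genIdeal x ⊆ J :=
  fun _ hz => hz J hJ hx

section AddLeftMono

variable [AddLeftMono G] {x : G}

theorem nonneg_of_mem_multiples (hx : 0 ≤ x) {a : G} (ha : a ∈ AddSubmonoid.multiples x) :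
    0 ≤ a := by
  obtain ⟨n, rfl⟩ := ha
  exact nsmul_nonneg hx n

theorem genIdeal_eq_idealSpan (hx : 0 ≤ x) :
    genIdeal x = idealSpan (AddSubmonoid.multiples x) := by
  refine Set.Subset.antisymm
    (genIdeal_subset (isPogIdeal_idealSpan fun _ => nonneg_of_mem_multiples hx)
    ⟨x, AddSubmonoid.mem_multiples x, neg_le_self hx, le_rfl⟩) fun z hz I hI hxI => ?_
  refine idealSpan_subset hI ?_ hz
  rintro _ ⟨n, rfl⟩
  exact hI.nsmul_mem hxI n

theorem isPogIdeal_genIdeal (hx : 0 ≤ x) : IsPogIdeal (genIdeal x) := by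
  rw [genIdeal_eq_idealSpan hx]
  exact isPogIdeal_idealSpan fun _ => nonneg_of_mem_multiples hx

theorem mem_genIdeal_iff (hx : 0 ≤ x) {z : G} (hz : 0 ≤ z) : z ∈ genIdeal x ↔ PropG z x := by
  rw [genIdeal_eq_idealSpan hx]
  constructor
  · rintro ⟨_, ⟨n, rfl⟩, -, hzn⟩
    exact ⟨n + 1, le_add_self, hzn.trans (nsmul_le_nsmul_left hx n.le_succ)⟩
  · rintro ⟨n, -, hzn⟩
    exact ⟨n • x, ⟨n, rfl⟩, (neg_nonpos.mpr (nsmul_nonneg hx n)).trans hz, hzn⟩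

theorem genIdeal_eq_genIdeal_iff {y : G} (hx : 0 ≤ x) (hy : 0 ≤ y) :
    genIdeal x = genIdeal y ↔ PropG x y ∧ PropG y x := by
  rw [← mem_genIdeal_iff hy hx, ← mem_genIdeal_iff hx hy]
  refine ⟨fun h => ⟨h ▸ mem_genIdeal_self x, h ▸ mem_genIdeal_self y⟩, fun ⟨hxy, hyx⟩ => ?_⟩
  exact Set.Subset.antisymm (genIdeal_subset (isPogIdeal_genIdeal hy) hxy)
    (genIdeal_subset (isPogIdeal_genIdeal hx) hyx)

end AddLeftMono

def IsOrderUnit (I : Set G) (u : G) : Prop :=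
  u ∈ I ∧ 0 ≤ u ∧ ∀ y ∈ I, PropG y u

theorem isOrderUnit_iff [AddLeftMono G] {I : Set G} (hI : IsPogIdeal I) {u : G} :
    IsOrderUnit I u ↔ ∃ _ : 0 ≤ u, I = genIdeal u := by
  constructor
  · rintro ⟨huI, hu0, hunit⟩
    refine ⟨hu0, Set.Subset.antisymm ?_ (genIdeal_subset hI huI)⟩
    exact hI.subset_of_forall_nonneg (isPogIdeal_genIdeal hu0)
      fun y hy hy0 => (mem_genIdeal_iff hu0 hy0).mpr (hunit y hy)
  · rintro ⟨hu0, rfl⟩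
    refine ⟨mem_genIdeal_self u, hu0, fun y hy => ?_⟩
    obtain ⟨w, hw, hw0, -, hyw⟩ := (isPogIdeal_genIdeal hu0).exists_nonneg_bound hy
    obtain ⟨n, hn, hwn⟩ := (mem_genIdeal_iff hu0 hw0).mp hw
    exact ⟨n, hn, hyw.trans hwn⟩

end Ideals

abbrev PogIdeal (G : Type*) [AddCommGroup G] [PartialOrder G] : Type _ :=
  {I : Set G // IsPogIdeal I}

namespace PogIdeal

variable {G : Type*} [AddCommGroup G] [PartialOrder G]

theorem isPogIdeal_biUnion {s : Set (PogIdeal G)} (hne : s.Nonempty)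
    (hdir : DirectedOn (· ≤ ·) s) : IsPogIdeal (⋃ I ∈ s, I.1) := by
  have common : ∀ x ∈ ⋃ I ∈ s, I.1, ∀ y ∈ ⋃ I ∈ s, I.1, ∃ K ∈ s, x ∈ K.1 ∧ y ∈ K.1 := by
    simp only [Set.mem_iUnion₂]
    rintro x ⟨I, hI, hx⟩ y ⟨J, hJ, hy⟩
    obtain ⟨K, hK, hIK, hJK⟩ := hdir I hI J hJ
    exact ⟨K, hK, hIK hx, hJK hy⟩
  obtain ⟨I₀, hI₀⟩ := hne
  refine ⟨Set.mem_biUnion hI₀ I₀.2.zero_mem, fun x hx y hy => ?_, fun x hx => ?_,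
    fun x hx y hy => ?_, fun x hx z hz y hxy hyz => ?_⟩
  · obtain ⟨K, hK, hxK, hyK⟩ := common x hx y hy
    exact Set.mem_biUnion hK (K.2.add_mem hxK hyK)
  · obtain ⟨K, hK, hxK, -⟩ := common x hx x hx
    exact Set.mem_biUnion hK (K.2.neg_mem hxK)
  · obtain ⟨K, hK, hxK, hyK⟩ := common x hx y hy
    obtain ⟨z, hzK, hxz, hyz⟩ := K.2.exists_ge hxK hyK
    exact ⟨z, Set.mem_biUnion hK hzK, hxz, hyz⟩
  · obtain ⟨K, hK, hxK, hzK⟩ := common x hx z hz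
    exact Set.mem_biUnion hK (K.2.mem_of_le_of_le hxK hzK hxy hyz)

variable [AddLeftMono G]

theorem le_of_forall_nonneg {I J : PogIdeal G} (h : ∀ z ∈ I.1, 0 ≤ z → z ∈ J.1) : I ≤ J :=
  I.2.subset_of_forall_nonneg J.2 h

def nonnegPart (I : PogIdeal G) : AddSubmonoid G where
  carrier := {x | x ∈ I.1 ∧ 0 ≤ x}
  add_mem' hx hy := ⟨I.2.add_mem hx.1 hy.1, add_nonneg hx.2 hy.2⟩
  zero_mem' := ⟨I.2.zero_mem, le_rfl⟩

theorem nonneg_of_mem_iSup_nonnegPart {s : Set (PogIdeal G)} {a : G}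
    (ha : a ∈ ⨆ I ∈ s, nonnegPart I) : 0 ≤ a :=
  (iSup₂_le (fun _ _ _ hx => hx.2) : ⨆ I ∈ s, nonnegPart I ≤ AddSubmonoid.nonneg G) ha

instance : SupSet (PogIdeal G) :=
  ⟨fun s => ⟨idealSpan (⨆ I ∈ s, nonnegPart I),
    isPogIdeal_idealSpan fun _ => nonneg_of_mem_iSup_nonnegPart⟩⟩

theorem isLUB_sSup (s : Set (PogIdeal G)) : IsLUB s (sSup s) := by
  refine ⟨fun I hI z hz => ?_, fun J hJ => idealSpan_subset J.2 fun a ha => ?_⟩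
  · obtain ⟨w, hwI, hw0, hwz, hzw⟩ := I.2.exists_nonneg_bound hz
    exact ⟨w, (le_iSup₂ (f := fun I _ => nonnegPart I) I hI : _) ⟨hwI, hw0⟩, hwz, hzw⟩
  · exact ((iSup₂_le fun I hI x hx => ⟨hJ hI hx.1, hx.2⟩ :
      ⨆ I ∈ s, nonnegPart I ≤ nonnegPart J) ha).1

instance : CompleteLattice (PogIdeal G) := completeLatticeOfSup _ isLUB_sSup

theorem exists_add_of_nonneg_mem_sup (hG : IsInterpolationGroup G) {J K : PogIdeal G} {z : G}
    (hz0 : 0 ≤ z) (hz : z ∈ (J ⊔ K).1) :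
    ∃ b ∈ J.1, 0 ≤ b ∧ ∃ c ∈ K.1, 0 ≤ c ∧ z = b + c := by
  change z ∈ idealSpan (⨆ I ∈ ({J, K} : Set (PogIdeal G)), nonnegPart I) at hz
  rw [iSup_pair] at hz
  obtain ⟨_, ha, -, hza⟩ := hz
  obtain ⟨b, hb, c, hc, rfl⟩ := AddSubmonoid.mem_sup.mp ha
  obtain ⟨b', c', hb'0, hb'b, hc'0, hc'c, rfl⟩ := hG.riesz_decomposition hz0 hb.2 hc.2 hza
  exact ⟨b', J.2.mem_of_nonneg_of_le hb'0 hb'b hb.1, hb'0,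
    c', K.2.mem_of_nonneg_of_le hc'0 hc'c hc.1, hc'0, rfl⟩

theorem coe_inf (hG : IsInterpolationGroup G) (I J : PogIdeal G) : (I ⊓ J).1 = I.1 ∩ J.1 :=
  Set.Subset.antisymm (Set.subset_inter (inf_le_left : I ⊓ J ≤ I) (inf_le_right : I ⊓ J ≤ J))
    (le_inf Set.inter_subset_left Set.inter_subset_right :
      (⟨I.1 ∩ J.1, I.2.inter hG J.2⟩ : PogIdeal G) ≤ I ⊓ J)

theorem inf_sup_left (hG : IsInterpolationGroup G) (I J K : PogIdeal G) :
    I ⊓ (J ⊔ K) = I ⊓ J ⊔ I ⊓ K := by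
  refine le_antisymm (le_of_forall_nonneg fun z hz hz0 => ?_)
    (sup_le (inf_le_inf_left _ le_sup_left) (inf_le_inf_left _ le_sup_right))
  rw [coe_inf hG] at hz
  obtain ⟨b, hbJ, hb0, c, hcK, hc0, rfl⟩ := exists_add_of_nonneg_mem_sup hG hz0 hz.2
  have hbI : b ∈ I.1 := I.2.mem_of_nonneg_of_le hb0 (le_add_of_nonneg_right hc0) hz.1
  have hcI : c ∈ I.1 := I.2.mem_of_nonneg_of_le hc0 (le_add_of_nonneg_left hb0) hz.1
  refine (I ⊓ J ⊔ I ⊓ K).2.add_mem (le_sup_left (b := I ⊓ K) ?_) (le_sup_right (a := I ⊓ J) ?_)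
  · rw [coe_inf hG]; exact ⟨hbI, hbJ⟩
  · rw [coe_inf hG]; exact ⟨hcI, hcK⟩

def principal (x : G) (hx : 0 ≤ x) : PogIdeal G := ⟨genIdeal x, isPogIdeal_genIdeal hx⟩

theorem principal_le {x : G} (hx : 0 ≤ x) {I : PogIdeal G} (h : x ∈ I.1) : principal x hx ≤ I :=
  genIdeal_subset I.2 h

theorem principal_le_principal_add {x y : G} (hx : 0 ≤ x) (hy : 0 ≤ y) :
    principal x hx ≤ principal (x + y) (add_nonneg hx hy) :=
  principal_le hx <| (mem_genIdeal_iff (add_nonneg hx hy) hx).mpr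
    ⟨1, le_rfl, by rw [one_nsmul]; exact le_add_of_nonneg_right hy⟩

theorem principal_add {x y : G} (hx : 0 ≤ x) (hy : 0 ≤ y) :
    principal (x + y) (add_nonneg hx hy) = principal x hx ⊔ principal y hy := by
  refine le_antisymm (principal_le _ ((principal x hx ⊔ principal y hy).2.add_mem
    (le_sup_left (b := principal y hy) (mem_genIdeal_self x))
    (le_sup_right (a := principal x hx) (mem_genIdeal_self y)))) (sup_le ?_ ?_)
  · exact principal_le_principal_add hx hy
  · simpa only [add_comm x y] using principal_le_principal_add hy hx

theorem isCompactElement_principal {x : G} (hx : 0 ≤ x) : IsCompactElement (principal x hx) := by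
  refine (CompleteLattice.isCompactElement_iff_le_of_directed_sSup_le _ _).mpr
    fun s hne hdir hle => ?_
  let U : PogIdeal G := ⟨⋃ I ∈ s, I.1, isPogIdeal_biUnion hne hdir⟩
  have hxU : x ∈ U.1 := (hle.trans (sSup_le fun I hI => Set.subset_biUnion_of_mem hI))
    (mem_genIdeal_self x)
  obtain ⟨I, hI, hxI⟩ := Set.mem_iUnion₂.mp hxU
  exact ⟨I, hI, principal_le hx hxI⟩

theorem exists_eq_principal_of_isCompactElement {I : PogIdeal G} (hI : IsCompactElement I) :
    ∃ (x : G) (hx : 0 ≤ x), I = principal x hx := by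
  let s : Set (PogIdeal G) := {J | ∃ x ∈ I.1, ∃ hx : 0 ≤ x, J = principal x hx}
  have hne : s.Nonempty := ⟨_, 0, I.2.zero_mem, le_rfl, rfl⟩
  have hdir : DirectedOn (· ≤ ·) s := by
    rintro _ ⟨x, hxI, hx, rfl⟩ _ ⟨y, hyI, hy, rfl⟩
    refine ⟨_, ⟨x + y, I.2.add_mem hxI hyI, add_nonneg hx hy, rfl⟩,
      principal_le_principal_add hx hy, ?_⟩
    simpa only [add_comm x y] using principal_le_principal_add hy hx
  have hIs : I ≤ sSup s := le_of_forall_nonneg fun z hz hz0 =>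
    le_sSup (s := s) ⟨z, hz, hz0, rfl⟩ (mem_genIdeal_self z)
  obtain ⟨_, ⟨x, hxI, hx, rfl⟩, hIx⟩ :=
    (CompleteLattice.isCompactElement_iff_le_of_directed_sSup_le _ I).mp hI s hne hdir hIs
  exact ⟨x, hx, le_antisymm hIx (principal_le hx hxI)⟩

theorem isCompactElement_iff_exists_eq_principal {I : PogIdeal G} :
    IsCompactElement I ↔ ∃ (x : G) (hx : 0 ≤ x), I = principal x hx :=
  ⟨exists_eq_principal_of_isCompactElement, fun ⟨_, hx, h⟩ => h ▸ isCompactElement_principal hx⟩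

theorem exists_isOrderUnit_iff_exists_eq_principal {I : PogIdeal G} :
    (∃ u, IsOrderUnit I.1 u) ↔ ∃ (x : G) (hx : 0 ≤ x), I = principal x hx :=
  exists_congr fun _ => (isOrderUnit_iff I.2).trans <|
    exists_congr fun _ => ⟨fun h => Subtype.ext h, congrArg Subtype.val⟩

end PogIdeal

/-- For an interpolation group `G`, the set `Id G` of ideals of `G`, ordered by
inclusion, is a distributive complete lattice, and `[x] ↦` (smallest ideal containing
`x`) is a well-defined join-semilattice isomorphism from the maximal semilattice
quotient `∇(G⁺)` onto the ideals possessing an order-unit, which are exactly the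
compact elements of `Id G`. -/
theorem stmt7 (G : Type*) [AddCommGroup G] [PartialOrder G]
    [CovariantClass G G (· + ·) (· ≤ ·)]
    (hinterp : ∀ a₀ a₁ b₀ b₁ : G, a₀ ≤ b₀ → a₀ ≤ b₁ → a₁ ≤ b₀ → a₁ ≤ b₁ →
      ∃ x : G, a₀ ≤ x ∧ a₁ ≤ x ∧ x ≤ b₀ ∧ x ≤ b₁) :
    ∃ inst : CompleteLattice {I : Set G // IsPogIdeal I},
      (∀ I J : {I : Set G // IsPogIdeal I}, inst.le I J ↔ I.1 ⊆ J.1) ∧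
      (∀ I J K : {I : Set G // IsPogIdeal I},
        inst.inf I (inst.sup J K) = inst.sup (inst.inf I J) (inst.inf I K)) ∧
      ∃ hgen : ∀ x : G, 0 ≤ x → IsPogIdeal (genIdeal x),
        (∀ x : G, 0 ≤ x → x ∈ genIdeal x ∧
          ∀ J : Set G, IsPogIdeal J → x ∈ J → genIdeal x ⊆ J) ∧
        (∀ x y : G, 0 ≤ x → 0 ≤ y →
          (genIdeal x = genIdeal y ↔ PropG x y ∧ PropG y x)) ∧
        (∀ (x y : G) (hx : 0 ≤ x) (hy : 0 ≤ y),
          (⟨genIdeal (x + y), hgen _ (add_nonneg hx hy)⟩ : {I : Set G // IsPogIdeal I}) =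
            inst.sup ⟨genIdeal x, hgen x hx⟩ ⟨genIdeal y, hgen y hy⟩) ∧
        (∀ I : {I : Set G // IsPogIdeal I},
          (@IsCompactElement _ inst.toPartialOrder I ↔
            ∃ u ∈ I.1, 0 ≤ u ∧ ∀ y ∈ I.1, ∃ n : ℕ, 1 ≤ n ∧ y ≤ n • u) ∧
          (@IsCompactElement _ inst.toPartialOrder I ↔
            ∃ (x : G) (hx : 0 ≤ x), I = ⟨genIdeal x, hgen x hx⟩)) := by
  refine ⟨inferInstance, fun _ _ => Iff.rfl, PogIdeal.inf_sup_left hinterp,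
    fun _ hx => isPogIdeal_genIdeal hx,
    fun x _ => ⟨mem_genIdeal_self x, fun _ hJ hxJ => genIdeal_subset hJ hxJ⟩,
    fun _ _ hx hy => genIdeal_eq_genIdeal_iff hx hy,
    fun _ _ hx hy => PogIdeal.principal_add hx hy,
    fun _ => ⟨?_, PogIdeal.isCompactElement_iff_exists_eq_principal⟩⟩
  exact PogIdeal.isCompactElement_iff_exists_eq_principal.trans
    PogIdeal.exists_isOrderUnit_iff_exists_eq_principal.symm
end

section
/- Let G be a dimension group, let n ≥ 1 be a natural number, and let a ∈ G. Then the set {x ∈ G : a ≤ n•x} is downward directed: for all x₀, x₁ ∈ G with a ≤ n•x₀ and a ≤ n•x₁ there exists x ∈ G with a ≤ n•x, x ≤ x₀ and x ≤ x₁. -/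
/-!
In a lattice-ordered group, `n • (x₀ ⊓ x₁)` is the meet of the mixed sums `k • x₀ + l • x₁` with
`k + l = n`. Unperforation puts `a` below every mixed sum, since `n • (k • x₀ + l • x₁ - a)` is a
nonnegative combination of `n • x₀ - a` and `n • x₁ - a`. Interpolation then replaces the summands
one at a time by a common lower bound `y` of `x₀` and `x₁`: at stage `j` we have
`a ≤ j • y + (k • x₀ + l • x₁)` whenever `k + l = n - j`, and the elements
`a - j • y - (k • x₀ + l • x₁)` with `k + l = n - j - 1` lie below both `x₀` and `x₁`, so a new `y`
can be chosen above them and above the old `y`.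
-/

section DimensionGroup

open Finset

variable {G : Type*} [AddCommGroup G] [PartialOrder G] [AddLeftMono G]

theorem le_nsmul_add_nsmul_of_le_nsmul
    (hunperf : ∀ n : ℕ, 1 ≤ n → ∀ x : G, 0 ≤ n • x → 0 ≤ x)
    {a x₀ x₁ : G} {k l : ℕ} (hkl : 1 ≤ k + l)
    (h₀ : a ≤ (k + l) • x₀) (h₁ : a ≤ (k + l) • x₁) : a ≤ k • x₀ + l • x₁ := by
  have hcomb : (k + l) • (k • x₀ + l • x₁ - a)
      = k • ((k + l) • x₀ - a) + l • ((k + l) • x₁ - a) := by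
    module
  refine sub_nonneg.1 (hunperf (k + l) hkl _ ?_)
  rw [hcomb]
  exact add_nonneg (nsmul_nonneg (sub_nonneg.2 h₀) k) (nsmul_nonneg (sub_nonneg.2 h₁) l)

theorem exists_le_and_le (hdir : ∀ a b : G, ∃ c : G, a ≤ c ∧ b ≤ c) (b₀ b₁ : G) :
    ∃ c : G, c ≤ b₀ ∧ c ≤ b₁ := by
  obtain ⟨c, hc₀, hc₁⟩ := hdir (-b₀) (-b₁)
  exact ⟨-c, neg_le.1 hc₀, neg_le.1 hc₁⟩

variable (hdir : ∀ a b : G, ∃ c : G, a ≤ c ∧ b ≤ c)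
  (hinterp : ∀ a₀ a₁ b₀ b₁ : G, a₀ ≤ b₀ → a₀ ≤ b₁ → a₁ ≤ b₀ → a₁ ≤ b₁ →
    ∃ x : G, a₀ ≤ x ∧ a₁ ≤ x ∧ x ≤ b₀ ∧ x ≤ b₁)
include hdir hinterp

theorem exists_finset_interpolant {ι : Type*} (s : Finset ι) (f : ι → G) {b₀ b₁ : G}
    (h₀ : ∀ i ∈ s, f i ≤ b₀) (h₁ : ∀ i ∈ s, f i ≤ b₁) :
    ∃ w : G, (∀ i ∈ s, f i ≤ w) ∧ w ≤ b₀ ∧ w ≤ b₁ := by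
  classical
  induction s using Finset.induction_on with
  | empty =>
    obtain ⟨c, hc₀, hc₁⟩ := exists_le_and_le hdir b₀ b₁
    exact ⟨c, by simp, hc₀, hc₁⟩
  | insert i s _ ih =>
    simp only [Finset.mem_insert, forall_eq_or_imp] at h₀ h₁ ⊢
    obtain ⟨w, hw, hw₀, hw₁⟩ := ih h₀.2 h₁.2
    obtain ⟨w', hiw', hww', hw'₀, hw'₁⟩ := hinterp (f i) w b₀ b₁ h₀.1 h₁.1 hw₀ hw₁
    exact ⟨w', ⟨hiw', fun j hj => (hw j hj).trans hww'⟩, hw'₀, hw'₁⟩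

theorem exists_nsmul_add_mixed_sum_succ {a x₀ x₁ y : G} {j r : ℕ} (hy₀ : y ≤ x₀) (hy₁ : y ≤ x₁)
    (h : ∀ k l : ℕ, k + l = r + 1 → a ≤ j • y + (k • x₀ + l • x₁)) :
    ∃ y' : G, y' ≤ x₀ ∧ y' ≤ x₁ ∧
      ∀ k l : ℕ, k + l = r → a ≤ (j + 1) • y' + (k • x₀ + l • x₁) := by
  set f : ℕ × ℕ → G := fun p => a - j • y - (p.1 • x₀ + p.2 • x₁)
  have hf₀ : ∀ p ∈ antidiagonal r, f p ≤ x₀ := by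
    rintro ⟨k, l⟩ hp
    replace hp : k + l = r := HasAntidiagonal.mem_antidiagonal.1 hp
    simp only [f, sub_le_iff_le_add]
    calc a ≤ j • y + ((k + 1) • x₀ + l • x₁) := h (k + 1) l (by omega)
      _ = x₀ + (k • x₀ + l • x₁) + j • y := by rw [succ_nsmul]; abel
  have hf₁ : ∀ p ∈ antidiagonal r, f p ≤ x₁ := by
    rintro ⟨k, l⟩ hp
    replace hp : k + l = r := HasAntidiagonal.mem_antidiagonal.1 hp
    simp only [f, sub_le_iff_le_add]
    calc a ≤ j • y + (k • x₀ + (l + 1) • x₁) := h k (l + 1) (by omega)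
      _ = x₁ + (k • x₀ + l • x₁) + j • y := by rw [succ_nsmul]; abel
  obtain ⟨w, hfw, hw₀, hw₁⟩ := exists_finset_interpolant hdir hinterp _ f hf₀ hf₁
  obtain ⟨y', hyy', hwy', hy'₀, hy'₁⟩ := hinterp y w x₀ x₁ hy₀ hy₁ hw₀ hw₁
  refine ⟨y', hy'₀, hy'₁, fun k l hkl => ?_⟩
  have hfy' : f (k, l) ≤ y' := (hfw (k, l) (HasAntidiagonal.mem_antidiagonal.2 hkl)).trans hwy'
  simp only [f, sub_le_iff_le_add] at hfy'
  calc a ≤ y' + (k • x₀ + l • x₁) + j • y := hfy'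
    _ ≤ y' + (k • x₀ + l • x₁) + j • y' := by gcongr
    _ = (j + 1) • y' + (k • x₀ + l • x₁) := by rw [succ_nsmul]; abel

theorem exists_nsmul_add_mixed_sum {a x₀ x₁ : G} (j r : ℕ)
    (h : ∀ k l : ℕ, k + l = j + r → a ≤ k • x₀ + l • x₁) :
    ∃ y : G, y ≤ x₀ ∧ y ≤ x₁ ∧ ∀ k l : ℕ, k + l = r → a ≤ j • y + (k • x₀ + l • x₁) := by
  induction j generalizing r with
  | zero =>
    obtain ⟨y, hy₀, hy₁⟩ := exists_le_and_le hdir x₀ x₁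
    exact ⟨y, hy₀, hy₁, fun k l hkl => by simpa using h k l (by omega)⟩
  | succ j ih =>
    obtain ⟨y, hy₀, hy₁, hy⟩ := ih (r + 1) fun k l hkl => h k l (by omega)
    exact exists_nsmul_add_mixed_sum_succ hdir hinterp hy₀ hy₁ hy

end DimensionGroup

/-- In a dimension group `G` (a directed, unperforated interpolation group), for every
`n ≥ 1` and `a ∈ G`, the set `{x : a ≤ n • x}` is downward directed. -/
theorem stmt8 (G : Type*) [AddCommGroup G] [PartialOrder G]
    [CovariantClass G G (· + ·) (· ≤ ·)]
    (hdir : ∀ a b : G, ∃ c : G, a ≤ c ∧ b ≤ c)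
    (hunperf : ∀ n : ℕ, 1 ≤ n → ∀ x : G, 0 ≤ n • x → 0 ≤ x)
    (hinterp : ∀ a₀ a₁ b₀ b₁ : G, a₀ ≤ b₀ → a₀ ≤ b₁ → a₁ ≤ b₀ → a₁ ≤ b₁ →
      ∃ x : G, a₀ ≤ x ∧ a₁ ≤ x ∧ x ≤ b₀ ∧ x ≤ b₁)
    (n : ℕ) (hn : 1 ≤ n) (a x₀ x₁ : G) (h₀ : a ≤ n • x₀) (h₁ : a ≤ n • x₁) :
    ∃ x : G, a ≤ n • x ∧ x ≤ x₀ ∧ x ≤ x₁ := by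
  have hmixed : ∀ k l : ℕ, k + l = n + 0 → a ≤ k • x₀ + l • x₁ := fun k l hkl =>
    le_nsmul_add_nsmul_of_le_nsmul hunperf (by omega) (by rwa [hkl]) (by rwa [hkl])
  obtain ⟨y, hy₀, hy₁, hy⟩ := exists_nsmul_add_mixed_sum hdir hinterp n 0 hmixed
  exact ⟨y, by simpa using hy 0 0 rfl, hy₀, hy₁⟩
end

section
/- Let G be a directed partially ordered abelian group. Then G is a dimension group if and only if its positive cone G⁺ satisfies the strong Riesz interpolation property: for every natural number n ≥ 1 and all a, b, c, d ∈ G⁺ with n•a + b = n•c + d, there exist u, v, w, z ∈ G⁺ such that a = u + v, b = n•w + z, c = u + w, and d = n•v + z. -/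
/-!
Given `n • a + b = n • c + d` in the positive cone, put `e = n • a - d = n • c - b`, so that
`e ≤ n • a` and `e ≤ n • c`. The heart of the matter is to find `0 ≤ u ≤ a, c` with
`e ≤ n • u`; then `v = a - u`, `w = c - u`, `z = n • u - e` is the required decomposition.
Such a `u` is built by induction on `n`: unperforation upgrades `e ≤ (n + 1) • a, (n + 1) • c`
to the cross inequalities `e ≤ n • a + c` and `e ≤ n • c + a`, and interpolation then splits
off a piece `0 ≤ d ≤ a, c` with `e - d ≤ n • a, n • c`, to which the induction hypothesis applies.

Conversely, the case `n = 1` is interpolation, and unperforation follows by decomposing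
`n • (x + k) + 0 = n • k + n • x` for some `k ≥ 0, -x`.
-/

def IsUnperforated (G : Type*) [AddCommGroup G] [PartialOrder G] : Prop :=
  ∀ n : ℕ, 1 ≤ n → ∀ x : G, 0 ≤ n • x → 0 ≤ x

def HasRieszInterpolation (G : Type*) [LE G] : Prop :=
  ∀ a₀ a₁ b₀ b₁ : G, a₀ ≤ b₀ → a₀ ≤ b₁ → a₁ ≤ b₀ → a₁ ≤ b₁ →
    ∃ x : G, a₀ ≤ x ∧ a₁ ≤ x ∧ x ≤ b₀ ∧ x ≤ b₁

def HasStrongRieszInterpolation (G : Type*) [AddCommGroup G] [PartialOrder G] : Prop :=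
  ∀ n : ℕ, 1 ≤ n → ∀ a b c d : G, 0 ≤ a → 0 ≤ b → 0 ≤ c → 0 ≤ d →
    n • a + b = n • c + d →
    ∃ u v w z : G, 0 ≤ u ∧ 0 ≤ v ∧ 0 ≤ w ∧ 0 ≤ z ∧
      a = u + v ∧ b = n • w + z ∧ c = u + w ∧ d = n • v + z

theorem HasRieszInterpolation.exists_three {G : Type*} [Preorder G] (hI : HasRieszInterpolation G)
    {x₀ x₁ x₂ y₀ y₁ : G} (h₀₀ : x₀ ≤ y₀) (h₀₁ : x₀ ≤ y₁) (h₁₀ : x₁ ≤ y₀) (h₁₁ : x₁ ≤ y₁)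
    (h₂₀ : x₂ ≤ y₀) (h₂₁ : x₂ ≤ y₁) : ∃ t : G, x₀ ≤ t ∧ x₁ ≤ t ∧ x₂ ≤ t ∧ t ≤ y₀ ∧ t ≤ y₁ := by
  obtain ⟨s, hs₀, hs₁, hsy₀, hsy₁⟩ := hI x₀ x₁ y₀ y₁ h₀₀ h₀₁ h₁₀ h₁₁
  obtain ⟨t, hst, ht₂, hty₀, hty₁⟩ := hI s x₂ y₀ y₁ hsy₀ hsy₁ h₂₀ h₂₁
  exact ⟨t, hs₀.trans hst, hs₁.trans hst, ht₂, hty₀, hty₁⟩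

section OrderedGroup

variable {G : Type*} [AddCommGroup G] [PartialOrder G] [IsOrderedAddMonoid G]

theorem HasStrongRieszInterpolation.hasRieszInterpolation (hS : HasStrongRieszInterpolation G) :
    HasRieszInterpolation G := by
  intro a₀ a₁ b₀ b₁ h₀₀ h₀₁ h₁₀ h₁₁
  obtain ⟨u, v, w, z, hu, hv, hw, hz, h₁, -, h₃, h₄⟩ :=
    hS 1 le_rfl (b₀ - a₀) (b₁ - a₁) (b₀ - a₁) (b₁ - a₀) (sub_nonneg.2 h₀₀) (sub_nonneg.2 h₁₁)
      (sub_nonneg.2 h₁₀) (sub_nonneg.2 h₀₁) (by rw [one_nsmul, one_nsmul]; abel)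
  rw [one_nsmul] at h₄
  rw [sub_eq_iff_eq_add'] at h₁ h₃ h₄
  have hx : a₀ + v = a₁ + w := by
    calc a₀ + v = b₀ - u := by rw [h₁]; abel
      _ = a₁ + w := by rw [h₃]; abel
  refine ⟨a₀ + v, le_add_of_nonneg_right hv, hx ▸ le_add_of_nonneg_right hw, ?_, ?_⟩
  · calc a₀ + v ≤ a₀ + v + u := le_add_of_nonneg_right hu
      _ = b₀ := by rw [h₁]; abel
  · calc a₀ + v ≤ a₀ + v + z := le_add_of_nonneg_right hz
      _ = b₁ := by rw [h₄]; abel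

theorem HasStrongRieszInterpolation.isUnperforated [IsDirectedOrder G]
    (hS : HasStrongRieszInterpolation G) : IsUnperforated G := by
  intro n hn x hx
  obtain ⟨k, hk, hxk⟩ := exists_ge_ge 0 (-x)
  obtain ⟨u, v, w, z, -, hv, hw, hz, hxkuv, hwz, hku, -⟩ :=
    hS n hn (x + k) 0 k (n • x) (neg_le_iff_add_nonneg'.1 hxk) le_rfl hk hx
      (by rw [smul_add, add_zero, add_comm])
  have hw₀ : w = 0 := by
    have hnw : n • w = 0 := ((add_eq_zero_iff_of_nonneg (nsmul_nonneg hw n) hz).1 hwz.symm).1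
    exact le_antisymm (hnw ▸ le_self_nsmul hw (by omega)) hw
  rw [hw₀, add_zero] at hku
  rw [hku, add_comm] at hxkuv
  exact add_left_cancel hxkuv ▸ hv

theorem IsUnperforated.le_of_nsmul_le_nsmul (hU : IsUnperforated G) {n : ℕ} (hn : 1 ≤ n)
    {x y : G} (h : n • x ≤ n • y) : x ≤ y :=
  sub_nonneg.1 <| hU n hn _ <| by rwa [smul_sub, sub_nonneg]

theorem IsUnperforated.le_nsmul_add (hU : IsUnperforated G) {n : ℕ} {e p q : G}
    (hp : e ≤ (n + 1) • p) (hq : e ≤ (n + 1) • q) : e ≤ n • p + q := by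
  refine hU.le_of_nsmul_le_nsmul (n := n + 1) (by omega) ?_
  calc (n + 1) • e = n • e + e := succ_nsmul e n
    _ ≤ n • ((n + 1) • p) + (n + 1) • q := add_le_add (nsmul_le_nsmul_right hp n) hq
    _ = (n + 1) • (n • p + q) := by rw [smul_add, ← mul_smul, ← mul_smul, Nat.mul_comm]

theorem exists_nonneg_le_le_sub_le_nsmul (hU : IsUnperforated G) (hI : HasRieszInterpolation G)
    {n : ℕ} {e a c : G} (ha : 0 ≤ a) (hc : 0 ≤ c) (hea : e ≤ (n + 1) • a)
    (hec : e ≤ (n + 1) • c) :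
    ∃ d : G, 0 ≤ d ∧ d ≤ a ∧ d ≤ c ∧ e - d ≤ n • a ∧ e - d ≤ n • c := by
  have hea' : e - n • a ≤ a := by rwa [sub_le_iff_le_add, ← succ_nsmul']
  have hec' : e - n • c ≤ c := by rwa [sub_le_iff_le_add, ← succ_nsmul']
  have hac : e - n • a ≤ c := sub_le_iff_le_add'.2 (hU.le_nsmul_add hea hec)
  have hca : e - n • c ≤ a := sub_le_iff_le_add'.2 (hU.le_nsmul_add hec hea)
  obtain ⟨d, hda, hdc, hd, hda', hdc'⟩ := hI.exists_three hea' hac hca hec' ha hc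
  exact ⟨d, hd, hda', hdc', sub_le_comm.1 hda, sub_le_comm.1 hdc⟩

theorem exists_nonneg_le_le_le_nsmul (hU : IsUnperforated G) (hI : HasRieszInterpolation G)
    {n : ℕ} (hn : 1 ≤ n) {e a c : G} (ha : 0 ≤ a) (hc : 0 ≤ c) (hea : e ≤ n • a)
    (hec : e ≤ n • c) : ∃ u : G, 0 ≤ u ∧ u ≤ a ∧ u ≤ c ∧ e ≤ n • u := by
  induction n, hn using Nat.le_induction generalizing e with
  | base =>
    rw [one_nsmul] at hea hec
    obtain ⟨u, heu, hu, hua, huc⟩ := hI e 0 a c hea hec ha hc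
    exact ⟨u, hu, hua, huc, (one_nsmul u).symm ▸ heu⟩
  | succ n hn ih =>
    obtain ⟨d, hd, hda, hdc, hea', hec'⟩ := exists_nonneg_le_le_sub_le_nsmul hU hI ha hc hea hec
    obtain ⟨u', -, hu'a, hu'c, hu'⟩ := ih hea' hec'
    obtain ⟨u, hdu, hu'u, hua, huc⟩ := hI d u' a c hda hdc hu'a hu'c
    refine ⟨u, hd.trans hdu, hua, huc, ?_⟩
    calc e = (e - d) + d := (sub_add_cancel e d).symm
      _ ≤ n • u + u := add_le_add (hu'.trans (nsmul_le_nsmul_right hu'u n)) hdu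
      _ = (n + 1) • u := (succ_nsmul u n).symm

theorem IsUnperforated.hasStrongRieszInterpolation (hU : IsUnperforated G)
    (hI : HasRieszInterpolation G) : HasStrongRieszInterpolation G := by
  intro n hn a b c d ha hb hc hd h
  have he : n • a - d = n • c - b := sub_eq_sub_iff_add_eq_add.2 h
  obtain ⟨u, hu, hua, huc, hue⟩ := exists_nonneg_le_le_le_nsmul hU hI hn ha hc
    (sub_le_self _ hd) (he ▸ sub_le_self _ hb)
  refine ⟨u, a - u, c - u, n • u - (n • a - d), hu, sub_nonneg.2 hua, sub_nonneg.2 huc,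
    sub_nonneg.2 hue, by abel, ?_, by abel, ?_⟩
  · rw [smul_sub, he]; abel
  · rw [smul_sub]; abel

end OrderedGroup

/-- A directed partially ordered abelian group is a dimension group (unperforated with
interpolation) if and only if its positive cone satisfies the strong Riesz
interpolation property. -/
theorem stmt9 (G : Type*) [AddCommGroup G] [PartialOrder G]
    [CovariantClass G G (· + ·) (· ≤ ·)]
    (hdir : ∀ a b : G, ∃ c : G, a ≤ c ∧ b ≤ c) :
    ((∀ n : ℕ, 1 ≤ n → ∀ x : G, 0 ≤ n • x → 0 ≤ x) ∧
     (∀ a₀ a₁ b₀ b₁ : G, a₀ ≤ b₀ → a₀ ≤ b₁ → a₁ ≤ b₀ → a₁ ≤ b₁ →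
       ∃ x : G, a₀ ≤ x ∧ a₁ ≤ x ∧ x ≤ b₀ ∧ x ≤ b₁)) ↔
    (∀ n : ℕ, 1 ≤ n → ∀ a b c d : G, 0 ≤ a → 0 ≤ b → 0 ≤ c → 0 ≤ d →
      n • a + b = n • c + d →
      ∃ u v w z : G, 0 ≤ u ∧ 0 ≤ v ∧ 0 ≤ w ∧ 0 ≤ z ∧
        a = u + v ∧ b = n • w + z ∧ c = u + w ∧ d = n • v + z) := by
  have : IsOrderedAddMonoid G := { add_le_add_left := fun _ _ h c => add_le_add_left h c }
  have : IsDirectedOrder G := ⟨hdir⟩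
  exact ⟨fun ⟨hU, hI⟩ => IsUnperforated.hasStrongRieszInterpolation hU hI,
    fun (hS : HasStrongRieszInterpolation G) => ⟨hS.isUnperforated, hS.hasRieszInterpolation⟩⟩
end

section
/- Let X be a set and D a collection of subsets of X closed under finite unions and finite intersections with ∅ ∈ D. For all f, g ∈ E⁺(D) the following are equivalent: (i) there exists a natural number n ≥ 1 such that n•g − f ∈ E⁺(D); (ii) there exists a natural number n ≥ 1 such that f(x) ≤ n·g(x) for all x ∈ X; (iii) supp(f) ⊆ supp(g). -/
/-- `B(D)`: the smallest collection of subsets of `X` containing `D` and closed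
under finite unions, finite intersections and set differences. -/
inductive InBD {X : Type*} (D : Set (Set X)) : Set X → Prop
  | base {A : Set X} : A ∈ D → InBD D A
  | union {A B : Set X} : InBD D A → InBD D B → InBD D (A ∪ B)
  | inter {A B : Set X} : InBD D A → InBD D B → InBD D (A ∩ B)
  | sdiff {A B : Set X} : InBD D A → InBD D B → InBD D (A \ B)

/-- `E(D)`: the functions `f : X → ℚ` with finite range which are measurable with
respect to `B(D)`. -/
def ED {X : Type*} (D : Set (Set X)) : Set (X → ℚ) :=
  {f : X → ℚ | (Set.range f).Finite ∧ ∀ r : ℚ, r ≠ 0 → InBD D (f ⁻¹' {r})}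

/-- `E⁺(D)`: the nonnegative elements of `E(D)` whose support belongs to `D`. -/
def EpD {X : Type*} (D : Set (Set X)) : Set (X → ℚ) :=
  {f : X → ℚ | f ∈ ED D ∧ (∀ x : X, 0 ≤ f x) ∧ {x : X | f x ≠ 0} ∈ D}

private lemma inbd_biUnion {X ι : Type*} {D : Set (Set X)} (hE : ∅ ∈ D)
    (s : Finset ι) (t : ι → Set X) (ht : ∀ i ∈ s, InBD D (t i)) :
    InBD D (⋃ i ∈ s, t i) := by
  classical
  induction s using Finset.induction with
  | empty => simpa using InBD.base hE
  | @insert a s ha ih =>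
    rw [Finset.set_biUnion_insert]
    exact .union (ht _ (Finset.mem_insert_self _ _))
      (ih fun i hi => ht i (Finset.mem_insert_of_mem hi))

private lemma mem_ED_sub {X : Type*} {D : Set (Set X)} (hempty : ∅ ∈ D)
    {f g : X → ℚ} (hf : f ∈ EpD D) (hg : g ∈ EpD D)
    (hsupp : {x : X | f x ≠ 0} ⊆ {x : X | g x ≠ 0}) (n : ℕ) :
    (n • g - f) ∈ ED D := by
  classical
  obtain ⟨⟨hfr, hfm⟩, hfpos, hfsupp⟩ := hf
  obtain ⟨⟨hgr, hgm⟩, hgpos, hgsupp⟩ := hg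
  have hfin : ((Set.range g) ×ˢ (Set.range f)).Finite := hgr.prod hfr
  constructor
  · apply Set.Finite.subset (hfin.image (fun p : ℚ × ℚ => (n : ℚ) * p.1 - p.2))
    rintro _ ⟨x, rfl⟩
    exact ⟨(g x, f x), ⟨⟨x, rfl⟩, ⟨x, rfl⟩⟩, by simp [nsmul_eq_mul]⟩
  · intro r hr
    set T : Finset (ℚ × ℚ) :=
      hfin.toFinset.filter (fun p => (n : ℚ) * p.1 - p.2 = r) with hT
    have hEq : (n • g - f) ⁻¹' {r} = ⋃ p ∈ T, (g ⁻¹' {p.1} ∩ f ⁻¹' {p.2}) := by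
      ext x
      simp only [Set.mem_preimage, Set.mem_singleton_iff, Pi.sub_apply, Pi.smul_apply, Pi.mul_apply, Pi.natCast_apply,
        nsmul_eq_mul, Set.mem_iUnion, Set.mem_inter_iff, hT, Finset.mem_filter,
        Set.Finite.mem_toFinset, Set.mem_prod]
      constructor
      · intro h
        exact ⟨(g x, f x), ⟨⟨⟨x, rfl⟩, ⟨x, rfl⟩⟩, h⟩, rfl, rfl⟩
      · rintro ⟨p, ⟨-, hp⟩, h1, h2⟩
        rw [h1, h2]; exact hp
    rw [hEq]
    apply inbd_biUnion hempty
    rintro ⟨a, b⟩ hp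
    rw [hT, Finset.mem_filter] at hp
    obtain ⟨-, hab⟩ := hp
    by_cases ha : a = 0
    · by_cases hb : b = 0
      · exact absurd (by rw [← hab, ha, hb]; ring) hr
      · have : (g ⁻¹' {a} ∩ f ⁻¹' {b}) = ∅ := by
          ext x
          simp only [Set.mem_inter_iff, Set.mem_preimage, Set.mem_singleton_iff,
            Set.mem_empty_iff_false, iff_false]
          rintro ⟨h1, h2⟩
          exact (hsupp (by simp [h2, hb] : f x ≠ 0)) (by simp [h1, ha])
        rw [this]; exact .base hempty
    · by_cases hb : b = 0
      · have : (g ⁻¹' {a} ∩ f ⁻¹' {b}) = g ⁻¹' {a} \ {x : X | f x ≠ 0} := by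
          ext x
          simp [hb, Set.mem_diff]
        rw [this]
        exact .sdiff (hgm a ha) (.base hfsupp)
      · exact .inter (hgm a ha) (hfm b hb)

/-- For `f, g ∈ E⁺(D)`, the following are equivalent: (i) `f ≤⁺ n • g` for some
`n ≥ 1`; (ii) `f ≤ n • g` pointwise for some `n ≥ 1`; (iii) `supp f ⊆ supp g`. -/
theorem stmt12 (X : Type*) (D : Set (Set X)) (hempty : ∅ ∈ D)
    (hunion : ∀ A ∈ D, ∀ B ∈ D, A ∪ B ∈ D)
    (hinter : ∀ A ∈ D, ∀ B ∈ D, A ∩ B ∈ D)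
    (f g : X → ℚ) (hf : f ∈ EpD D) (hg : g ∈ EpD D) :
    ((∃ n : ℕ, 1 ≤ n ∧ n • g - f ∈ EpD D) ↔
      (∃ n : ℕ, 1 ≤ n ∧ ∀ x : X, f x ≤ (n : ℚ) * g x)) ∧
    ((∃ n : ℕ, 1 ≤ n ∧ ∀ x : X, f x ≤ (n : ℚ) * g x) ↔
      {x : X | f x ≠ 0} ⊆ {x : X | g x ≠ 0}) := by
  classical
  obtain ⟨⟨hfr, hfm⟩, hfpos, hfsupp⟩ := hf
  obtain ⟨⟨hgr, hgm⟩, hgpos, hgsupp⟩ := hg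
  have hf' : f ∈ EpD D := ⟨⟨hfr, hfm⟩, hfpos, hfsupp⟩
  have hg' : g ∈ EpD D := ⟨⟨hgr, hgm⟩, hgpos, hgsupp⟩
  -- (ii) → (iii)
  have h23 : (∃ n : ℕ, 1 ≤ n ∧ ∀ x : X, f x ≤ (n : ℚ) * g x) →
      {x : X | f x ≠ 0} ⊆ {x : X | g x ≠ 0} := by
    rintro ⟨n, -, hn⟩ x hx
    intro hgx
    have := hn x
    rw [hgx, mul_zero] at this
    exact hx (le_antisymm this (hfpos x))
  -- (iii) → strong version: ∃ n ≥ 1, f x < n * g x for x with g x ≠ 0, and f x = 0 otherwise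
  have h32 : {x : X | f x ≠ 0} ⊆ {x : X | g x ≠ 0} →
      ∃ n : ℕ, 1 ≤ n ∧ (∀ x : X, f x ≤ (n : ℚ) * g x) ∧
        (∀ x : X, g x ≠ 0 → f x < (n : ℚ) * g x) := by
    intro hsub
    -- upper bound for f
    obtain ⟨M, hM⟩ := hfr.bddAbove
    have hMf : ∀ x, f x ≤ M := fun x => hM ⟨x, rfl⟩
    -- lower bound for nonzero values of g
    by_cases hS : (Set.range g \ {0}).Nonempty
    · have hSfin : (Set.range g \ {0}).Finite := hgr.subset Set.diff_subset
      set m : ℚ := hSfin.toFinset.min' (by simpa using hS) with hm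
      have hmS : m ∈ Set.range g \ {0} := by
        have := hSfin.toFinset.min'_mem (by simpa using hS)
        rwa [Set.Finite.mem_toFinset] at this
      have hmpos : 0 < m := by
        obtain ⟨⟨x, hx⟩, hm0⟩ := hmS
        have hnn : 0 ≤ m := hx ▸ hgpos x
        have hne : m ≠ 0 := by simpa using hm0
        exact lt_of_le_of_ne hnn (Ne.symm hne)
      have hmle : ∀ x, g x ≠ 0 → m ≤ g x := by
        intro x hx
        have : g x ∈ Set.range g \ {0} := ⟨⟨x, rfl⟩, hx⟩
        exact hSfin.toFinset.min'_le _ (by rwa [Set.Finite.mem_toFinset])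
      obtain ⟨n, hn⟩ := exists_nat_gt (M / m)
      refine ⟨n + 1, by omega, ?_, ?_⟩
      · intro x
        by_cases hgx : g x = 0
        · have hfx : f x = 0 := by
            by_contra h
            exact (hsub h) hgx
          simp [hfx, hgx]
        · have h1 : M < (n : ℚ) * m := by
            rw [div_lt_iff₀ hmpos] at hn
            exact hn
          have h2 : (n : ℚ) * m ≤ ((n + 1 : ℕ) : ℚ) * g x := by
            push_cast
            have : (n : ℚ) * m ≤ (n : ℚ) * g x :=
              mul_le_mul_of_nonneg_left (hmle x hgx) (by positivity)
            nlinarith [hmle x hgx, hmpos, hgpos x]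
          exact le_of_lt (lt_of_le_of_lt (hMf x) (lt_of_lt_of_le h1 h2))
      · intro x hgx
        have h1 : M < (n : ℚ) * m := by
          rw [div_lt_iff₀ hmpos] at hn
          exact hn
        have h2 : (n : ℚ) * m ≤ ((n + 1 : ℕ) : ℚ) * g x := by
          push_cast
          nlinarith [hmle x hgx, hmpos, hgpos x]
        exact lt_of_le_of_lt (hMf x) (lt_of_lt_of_le h1 h2)
    · -- g is identically 0, hence f is identically 0
      have hg0 : ∀ x, g x = 0 := by
        intro x
        by_contra h
        exact hS ⟨g x, ⟨x, rfl⟩, h⟩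
      have hf0 : ∀ x, f x = 0 := by
        intro x
        by_contra h
        exact (hsub h) (hg0 x)
      exact ⟨1, le_refl _, fun x => by simp [hf0 x, hg0 x],
        fun x hx => absurd (hg0 x) hx⟩
  constructor
  · constructor
    · rintro ⟨n, hn1, ⟨-, hpos, -⟩⟩
      refine ⟨n, hn1, fun x => ?_⟩
      have := hpos x
      simp only [Pi.sub_apply, Pi.smul_apply, Pi.mul_apply, Pi.natCast_apply, nsmul_eq_mul] at this
      linarith
    · intro h2
      obtain ⟨n, hn1, hle, hlt⟩ := h32 (h23 h2)
      refine ⟨n, hn1, mem_ED_sub hempty hf' hg' (h23 h2) n, fun x => ?_, ?_⟩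
      · simp only [Pi.sub_apply, Pi.smul_apply, Pi.mul_apply, Pi.natCast_apply, nsmul_eq_mul]
        linarith [hle x]
      · have : {x : X | (n • g - f) x ≠ 0} = {x : X | g x ≠ 0} := by
          ext x
          simp only [Set.mem_setOf_eq, Pi.sub_apply, Pi.smul_apply, Pi.mul_apply, Pi.natCast_apply, nsmul_eq_mul]
          constructor
          · intro h hgx
            have hfx : f x = 0 := by
              by_contra hfx
              exact (h23 h2) hfx hgx
            exact h (by rw [hgx, hfx]; ring)
          · intro hgx
            have := hlt x hgx
            intro he
            rw [sub_eq_zero] at he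
            exact absurd he.symm (ne_of_lt this)
        rw [this]
        exact hgsupp
  · exact ⟨h23, fun h => (h32 h).imp fun n ⟨h1, h2, _⟩ => ⟨h1, h2⟩⟩
end

section
/- Let P and Q be finite partially ordered sets, let H(P) and H(Q) be the lattices of lower subsets of P and Q ordered by inclusion, and let f : H(P) → H(Q) be a map preserving finite unions and the empty set. Let G⁺(P) denote the set of functions u : P → ℚ with u(p) ≥ 0 for all p and with support supp(u) = {p : u(p) ≠ 0} a lower subset of P, and similarly G⁺(Q). Then there exists a ℚ-linear map g : (P → ℚ) → (Q → ℚ) such that g maps G⁺(P) into G⁺(Q) and supp(g(u)) = f(supp(u)) for every u ∈ G⁺(P). -/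
/-- `G⁺(P)`: the nonnegative functions `u : P → ℚ` whose support is a lower subset
of `P`. -/
def GpP (P : Type*) [PartialOrder P] : Set (P → ℚ) :=
  {u : P → ℚ | (∀ p : P, 0 ≤ u p) ∧ IsLowerSet {p : P | u p ≠ 0}}

lemma mem_finset_sup_lowerSet {P Q : Type*} [PartialOrder Q] (s : Finset P)
    (g : P → LowerSet Q) (q : Q) : q ∈ s.sup g ↔ ∃ p ∈ s, q ∈ g p := by
  classical
  induction s using Finset.cons_induction with
  | empty => simp
  | cons a s ha ih =>
      simp [Finset.sup_cons, LowerSet.mem_sup_iff, ih]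

/-- Lifting lemma: a `0`-semilattice homomorphism `f : H(P) → H(Q)` between the
lattices of lower sets of finite posets `P` and `Q` lifts to a `ℚ`-linear map
`g : ℚ^P → ℚ^Q` carrying `G⁺(P)` into `G⁺(Q)` with `supp (g u) = f (supp u)` for
all `u ∈ G⁺(P)`. -/
theorem stmt14 (P Q : Type*) [PartialOrder P] [PartialOrder Q] [Finite P] [Finite Q]
    (f : LowerSet P → LowerSet Q)
    (hf_sup : ∀ U V : LowerSet P, f (U ⊔ V) = f U ⊔ f V)
    (hf_bot : f ⊥ = ⊥) :
    ∃ g : (P → ℚ) →ₗ[ℚ] (Q → ℚ),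
      ∀ u : P → ℚ, (∀ p : P, 0 ≤ u p) → ∀ hu : IsLowerSet {p : P | u p ≠ 0},
        g u ∈ GpP Q ∧
        {q : Q | g u q ≠ 0} = (f ⟨{p : P | u p ≠ 0}, hu⟩ : Set Q) := by
  classical
  haveI : Fintype P := Fintype.ofFinite P
  -- bundle f as a SupBotHom
  let F : SupBotHom (LowerSet P) (LowerSet Q) := ⟨⟨f, fun U V => hf_sup U V⟩, hf_bot⟩
  have hF : ∀ U, F U = f U := fun _ => rfl
  -- key: f of a lower set is the union of f(Iic p) over p in it
  have key : ∀ (U : LowerSet P) (q : Q),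
      q ∈ f U ↔ ∃ p ∈ U, q ∈ f (LowerSet.Iic p) := by
    intro U q
    have hU : U = (Finset.univ.filter (· ∈ U)).sup (fun p => LowerSet.Iic p) := by
      apply le_antisymm
      · intro x hx
        rw [SetLike.mem_coe, mem_finset_sup_lowerSet]
        exact ⟨x, by simpa using hx, le_refl x⟩
      · intro x hx
        rw [SetLike.mem_coe, mem_finset_sup_lowerSet] at hx
        obtain ⟨p, hp, hxp⟩ := hx
        simp only [Finset.mem_filter] at hp
        exact U.lower hxp hp.2
    have : f U = (Finset.univ.filter (· ∈ U)).sup (fun p => f (LowerSet.Iic p)) := by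
      conv_lhs => rw [hU]
      rw [← hF]
      rw [map_finset_sup]
      rfl
    rw [this, mem_finset_sup_lowerSet]
    simp
  -- define the linear map
  refine ⟨{ toFun := fun u q => ∑ p, u p * (if q ∈ f (LowerSet.Iic p) then 1 else 0)
            map_add' := by
              intro u v; funext q
              simp only [Pi.add_apply, add_mul, Finset.sum_add_distrib]
            map_smul' := by
              intro c u; funext q
              simp only [Pi.smul_apply, smul_eq_mul, RingHom.id_apply, Finset.mul_sum,
                mul_assoc] }, ?_⟩
  intro u hpos hu
  have hnn : ∀ q : Q, ∀ p ∈ Finset.univ,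
      0 ≤ u p * (if q ∈ f (LowerSet.Iic p) then (1:ℚ) else 0) := by
    intro q p _
    exact mul_nonneg (hpos p) (by positivity)
  have hsupp : ∀ q : Q,
      (∑ p, u p * (if q ∈ f (LowerSet.Iic p) then (1:ℚ) else 0)) ≠ 0 ↔
        ∃ p, u p ≠ 0 ∧ q ∈ f (LowerSet.Iic p) := by
    intro q
    rw [← not_iff_not, not_not, Finset.sum_eq_zero_iff_of_nonneg (hnn q)]
    push_neg
    constructor
    · intro h p hp
      have := h p (Finset.mem_univ p)
      rcases mul_eq_zero.mp this with h1 | h1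
      · exact absurd h1 hp
      · intro hq; simp [hq] at h1
    · intro h p _
      by_cases hp : u p = 0
      · simp [hp]
      · have := h p hp
        simp [this]
  have hset : {q : Q | (∑ p, u p * (if q ∈ f (LowerSet.Iic p) then (1:ℚ) else 0)) ≠ 0}
      = (f ⟨{p : P | u p ≠ 0}, hu⟩ : Set Q) := by
    ext q
    rw [Set.mem_setOf_eq, hsupp q, SetLike.mem_coe, key]
    constructor
    · rintro ⟨p, hp, hq⟩; exact ⟨p, hp, hq⟩
    · rintro ⟨p, hp, hq⟩; exact ⟨p, hp, hq⟩
  simp only [LinearMap.coe_mk, AddHom.coe_mk]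
  refine ⟨⟨fun q => Finset.sum_nonneg (hnn q), ?_⟩, hset⟩
  · rw [hset]
    exact (f _).lower
end

section
/- Let S be a countable distributive join-semilattice with a least element. Then there exist a countable ℚ-vector space E and a subset E⁺ ⊆ E containing 0, closed under addition and under multiplication by nonnegative rational scalars, with E⁺ ∩ (−E⁺) = {0}, with every element of E a difference of two elements of E⁺, with E⁺ satisfying the refinement property (so that E with positive cone E⁺ is a dimension group), together with a surjective map ν : E⁺ → S such that ν(x + y) = ν(x) ⊔ ν(y) for all x, y ∈ E⁺ and ν(x) ≤ ν(y) if and only if x ∝ y (i.e. n•y − x ∈ E⁺ for some n ≥ 1); that is, the maximal semilattice quotient ∇(E⁺) is isomorphic to S. If, in addition, S has a greatest element, then E⁺ contains an order-unit of E, i.e. an element u such that for every x ∈ E there is n ≥ 1 with n•u − x ∈ E⁺. -/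
/-!
Since `S` is countable and distributive, it is the direct limit of a sequence of finite Boolean
semilattices `2^{X n}`, mapped to `S` by valuations of their atoms. The transition maps send each
atom to a set of atoms with the same join, and, thanks to distributivity (which lets the atoms of
`A` be split along `B` whenever `⋁ A ≤ ⋁ B`), they turn every inequality between joins at stage
`n` into an inclusion of images at stage `n + 1`. Replacing `2^{X n}` by the simplicial vector
space `ℚ^{X n}` and each atom by the indicator vector of its image gives a direct system of
positive maps whose limit `E` is a dimension vector space (refinement holds coordinatewise, with
`min`). The valuation of a positive vector is the join over its support; it is invariant along the
system, and `x ∝ y` in `E` exactly when, at some stage, the support of `x` lies in that of `y`,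
which the inclusion property makes equivalent to `ν x ≤ ν y`.
-/

open Finset

/-- A representation of a join-semilattice `S` as the maximal semilattice quotient of
the positive cone of a dimension vector space over `ℚ`: a `ℚ`-vector space `E`, a
strict generating cone `pos ⊆ E` (closed under addition and nonnegative rational
scalars) satisfying the refinement property (so that `E` with positive cone `pos` is
a dimension group), and a map `ν : pos → S` which is surjective, turns addition into
join, and satisfies `ν x ≤ ν y ↔ x ∝ y` (i.e. `x ≤ n • y` for some `n ≥ 1`). -/
structure ConeRep (S : Type*) [SemilatticeSup S] where
  E : Type
  [addCommGroup : AddCommGroup E]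
  [module : Module ℚ E]
  pos : Set E
  nu : E → S
  zero_mem : (0 : E) ∈ pos
  add_mem : ∀ x ∈ pos, ∀ y ∈ pos, x + y ∈ pos
  smul_mem : ∀ q : ℚ, 0 ≤ q → ∀ x ∈ pos, q • x ∈ pos
  pos_antisymm : ∀ x : E, x ∈ pos → -x ∈ pos → x = 0
  generating : ∀ x : E, ∃ y ∈ pos, ∃ z ∈ pos, x = y - z
  refinement : ∀ f₀ ∈ pos, ∀ f₁ ∈ pos, ∀ g₀ ∈ pos, ∀ g₁ ∈ pos, f₀ + f₁ = g₀ + g₁ →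
    ∃ h₀₀ ∈ pos, ∃ h₀₁ ∈ pos, ∃ h₁₀ ∈ pos, ∃ h₁₁ ∈ pos,
      f₀ = h₀₀ + h₀₁ ∧ f₁ = h₁₀ + h₁₁ ∧ g₀ = h₀₀ + h₁₀ ∧ g₁ = h₀₁ + h₁₁
  surj : ∀ s : S, ∃ x ∈ pos, nu x = s
  map_add : ∀ x ∈ pos, ∀ y ∈ pos, nu (x + y) = nu x ⊔ nu y
  le_iff : ∀ x ∈ pos, ∀ y ∈ pos,
    (nu x ≤ nu y ↔ ∃ n : ℕ, 1 ≤ n ∧ n • y - x ∈ pos)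

attribute [instance] ConeRep.addCommGroup ConeRep.module

theorem exists_refinement_of_add_eq {G : Type*} [AddCommGroup G] [Lattice G]
    [IsOrderedAddMonoid G] {a₀ a₁ b₀ b₁ : G} (ha₀ : 0 ≤ a₀) (ha₁ : 0 ≤ a₁) (hb₀ : 0 ≤ b₀)
    (hb₁ : 0 ≤ b₁) (h : a₀ + a₁ = b₀ + b₁) :
    ∃ c₀₀ c₀₁ c₁₀ c₁₁ : G, 0 ≤ c₀₀ ∧ 0 ≤ c₀₁ ∧ 0 ≤ c₁₀ ∧ 0 ≤ c₁₁ ∧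
      a₀ = c₀₀ + c₀₁ ∧ a₁ = c₁₀ + c₁₁ ∧ b₀ = c₀₀ + c₁₀ ∧ b₁ = c₀₁ + c₁₁ := by
  refine ⟨a₀ ⊓ b₀, a₀ - a₀ ⊓ b₀, b₀ - a₀ ⊓ b₀, a₁ - (b₀ - a₀ ⊓ b₀), le_inf ha₀ hb₀,
    sub_nonneg.2 inf_le_left, sub_nonneg.2 inf_le_right, sub_nonneg.2 ?_,
    by abel, by abel, by abel, ?_⟩
  · rw [sub_le_iff_le_add, add_inf]
    exact le_inf (by rw [add_comm, h]; exact le_add_of_nonneg_right hb₁) (le_add_of_nonneg_left ha₁)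
  · rw [eq_sub_of_add_eq' h.symm]
    abel

namespace Finsupp

variable {ι α : Type*}

theorem support_add_of_nonneg [AddCommMonoid α] [PartialOrder α] [IsOrderedAddMonoid α]
    [DecidableEq ι] {v w : ι →₀ α} (hv : 0 ≤ v) (hw : 0 ≤ w) :
    (v + w).support = v.support ∪ w.support := by
  ext y
  simp [add_eq_zero_iff_of_nonneg (hv y) (hw y), imp_iff_not_or]

theorem eventually_le_nsmul_of_support_subset [AddCommMonoid α] [LinearOrder α]
    [IsOrderedAddMonoid α] [Archimedean α] {v w : ι →₀ α} (hw : 0 ≤ w)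
    (h : v.support ⊆ w.support) : ∀ᶠ n : ℕ in Filter.atTop, v ≤ n • w := by
  have hy (y) (hy : y ∈ w.support) : ∀ᶠ n : ℕ in Filter.atTop, v y ≤ n • w y := by
    obtain ⟨N, hN⟩ := Archimedean.arch (v y) ((hw y).lt_of_ne (mem_support_iff.1 hy).symm)
    exact Filter.eventually_atTop.2 ⟨N, fun n hn => hN.trans (nsmul_le_nsmul_left (hw y) hn)⟩
  filter_upwards [(Filter.eventually_all_finset _).2 hy] with n hn y
  by_cases hyw : y ∈ w.support
  · exact hn y hyw
  · simp [notMem_support_iff.1 hyw, notMem_support_iff.1 fun hyv => hyw (h hyv)]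

end Finsupp

theorem ConeRep.exists_orderUnit {S : Type*} [SemilatticeSup S] (R : ConeRep S) {t : S}
    (ht : ∀ s, s ≤ t) : ∃ u ∈ R.pos, ∀ x : R.E, ∃ n : ℕ, 1 ≤ n ∧ n • u - x ∈ R.pos := by
  obtain ⟨u, hu, rfl⟩ := R.surj t
  refine ⟨u, hu, fun x => ?_⟩
  obtain ⟨p, hp, q, hq, rfl⟩ := R.generating x
  obtain ⟨n, hn, hnp⟩ := (R.le_iff p hp u hu).1 (ht _)
  exact ⟨n, hn, by simpa [sub_add] using R.add_mem _ hnp q hq⟩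

def IsDistribSup (S : Type*) [SemilatticeSup S] : Prop :=
  ∀ a b₀ b₁ : S, a ≤ b₀ ⊔ b₁ → ∃ a₀ a₁ : S, a = a₀ ⊔ a₁ ∧ a₀ ≤ b₀ ∧ a₁ ≤ b₁

section

variable {S : Type*} [SemilatticeSup S] [OrderBot S]

theorem IsDistribSup.exists_eq_finset_sup (hS : IsDistribSup S) {ι : Type*} [DecidableEq ι]
    (B : Finset ι) (ψ : ι → S) {a : S} (ha : a ≤ B.sup ψ) :
    ∃ γ : ι → S, a = B.sup γ ∧ ∀ b ∈ B, γ b ≤ ψ b := by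
  induction B using Finset.induction_on generalizing a with
  | empty => exact ⟨fun _ => ⊥, by simpa using ha, by simp⟩
  | insert b B hb ih =>
    rw [sup_insert] at ha
    obtain ⟨a₀, a₁, rfl, ha₀, ha₁⟩ := hS a (ψ b) (B.sup ψ) ha
    obtain ⟨γ, rfl, hγ⟩ := ih ha₁
    refine ⟨Function.update γ b a₀, ?_, ?_⟩
    · rw [sup_insert, Function.update_self,
        sup_congr rfl fun x hx => Function.update_of_ne (ne_of_mem_of_not_mem hx hb) _ _]
    · simp only [forall_mem_insert, Function.update_self]
      refine ⟨ha₀, fun x hx => ?_⟩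
      rw [Function.update_of_ne (ne_of_mem_of_not_mem hx hb)]
      exact hγ x hx

variable (S) in
/-- The finite Boolean semilattice of subsets of `atoms`, mapped to `S` by `A ↦ A.sup val`. -/
structure Stage where
  atoms : Finset ℕ
  val : ℕ → S

/-- A join-homomorphism `2^P.atoms → 2^Q.atoms` over `S`, given by the set of atoms of `Q` into
which each atom of `P` splits. -/
structure Refinement (P Q : Stage S) where
  map : ℕ → Finset ℕ
  map_subset : ∀ x, map x ⊆ Q.atoms
  val_eq_sup : ∀ x ∈ P.atoms, P.val x = (map x).sup Q.val

namespace Refinement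

variable {P Q R : Stage S}

theorem sup_biUnion (r : Refinement P Q) {A : Finset ℕ} (hA : A ⊆ P.atoms) :
    (A.biUnion r.map).sup Q.val = A.sup P.val := by
  rw [Finset.sup_biUnion]
  exact sup_congr rfl fun x hx => (r.val_eq_sup x (hA hx)).symm

def comp (r : Refinement P Q) (r' : Refinement Q R) : Refinement P R where
  map x := (r.map x).biUnion r'.map
  map_subset x := biUnion_subset.2 fun y _ => r'.map_subset y
  val_eq_sup x hx := by rw [r'.sup_biUnion (r.map_subset x), r.val_eq_sup x hx]

theorem biUnion_comp (r : Refinement P Q) (r' : Refinement Q R) (A : Finset ℕ) :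
    A.biUnion (r.comp r').map = (A.biUnion r.map).biUnion r'.map :=
  (biUnion_biUnion _ _ _).symm

variable (P) in
def refl : Refinement P P where
  map x := {x} ∩ P.atoms
  map_subset _ := inter_subset_right
  val_eq_sup x hx := by simp [singleton_inter_of_mem hx]

end Refinement

theorem IsDistribSup.exists_refinement_biUnion_subset (hS : IsDistribSup S) (P : Stage S)
    {C D : Finset ℕ} (hD : D ⊆ P.atoms) (h : C.sup P.val ≤ D.sup P.val) :
    ∃ (Q : Stage S) (r : Refinement P Q), C.biUnion r.map ⊆ D.biUnion r.map := by
  classical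
  have hγ : ∀ c, ∃ γ : ℕ → S, c ∈ C → P.val c = D.sup γ ∧ ∀ d ∈ D, γ d ≤ P.val d := fun c =>
    if hc : c ∈ C then (hS.exists_eq_finset_sup D P.val ((le_sup hc).trans h)).imp fun _ h _ => h
    else ⟨⊥, fun h => absurd h hc⟩
  choose γ hγ using hγ
  -- Each `c ∈ C` is split into new atoms `(c, d)`, `d ∈ D`, of value `γ c d`, which are also
  -- put below `d`; every other atom survives as a copy of itself.
  set ι : ℕ ⊕ ℕ × ℕ → ℕ := Encodable.encode
  let split : ℕ → Finset ℕ := fun x =>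
    if x ∈ C then D.image fun d => ι (.inr (x, d)) else {ι (.inl x)}
  let below : ℕ → Finset ℕ := fun x =>
    if x ∈ D then C.image fun c => ι (.inr (c, x)) else ∅
  let Q : Stage S :=
    ⟨P.atoms.biUnion (split ⊔ below), Function.extend ι (Sum.elim P.val fun p => γ p.1 p.2) ⊥⟩
  have hQ (a) : Q.val (ι a) = Sum.elim P.val (fun p => γ p.1 p.2) a :=
    Encodable.encode_injective.extend_apply _ _ a
  have hsplit (x) : (split x).sup Q.val = P.val x := by
    by_cases hx : x ∈ C
    · simp [split, hx, Finset.sup_image, Function.comp_def, hQ, (hγ x hx).1]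
    · simp [split, hx, hQ]
  have hbelow (x) : (below x).sup Q.val ≤ P.val x := by
    by_cases hx : x ∈ D
    · simpa [below, hx, Finset.sup_image, Function.comp_def, hQ] using fun c hc => (hγ c hc).2 x hx
    · simp [below, hx]
  refine ⟨Q, ⟨fun x => if x ∈ P.atoms then split x ∪ below x else ∅, fun x => ?_, fun x hx => ?_⟩,
    ?_⟩
  · split_ifs with hx
    exacts [subset_biUnion_of_mem (split ⊔ below) hx, empty_subset _]
  · rw [if_pos hx, sup_union, hsplit, sup_eq_left.2 (hbelow x)]
  · intro y
    simp only [mem_biUnion]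
    rintro ⟨c, hc, hy⟩
    split_ifs at hy with hcP
    · rcases mem_union.1 hy with hy | hy
      · obtain ⟨d, hd, rfl⟩ : ∃ d ∈ D, ι (.inr (c, d)) = y := by simpa [split, hc] using hy
        exact ⟨d, hd, by simpa [hD hd, below, hd] using .inr ⟨c, hc, rfl⟩⟩
      · have hcD : c ∈ D := by by_contra h; simp [below, h] at hy
        exact ⟨c, hcD, by simp [hcP, hy]⟩
    · simp at hy

theorem IsDistribSup.exists_refinement_forall_biUnion_subset (hS : IsDistribSup S) (P : Stage S)
    (R : Finset (Finset ℕ × Finset ℕ))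
    (hR : ∀ p ∈ R, p.1 ⊆ P.atoms ∧ p.2 ⊆ P.atoms ∧ p.1.sup P.val ≤ p.2.sup P.val) :
    ∃ (Q : Stage S) (r : Refinement P Q), ∀ p ∈ R, p.1.biUnion r.map ⊆ p.2.biUnion r.map := by
  classical
  induction R using Finset.induction_on with
  | empty => exact ⟨P, Refinement.refl P, by simp⟩
  | insert p R _ ih =>
    obtain ⟨Q, r, hr⟩ := ih fun q hq => hR q (mem_insert_of_mem hq)
    obtain ⟨hp₁, hp₂, hp⟩ := hR p (mem_insert_self p R)
    obtain ⟨Q', r', hr'⟩ := hS.exists_refinement_biUnion_subset Q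
      (biUnion_subset.2 fun x _ => r.map_subset x)
      ((r.sup_biUnion hp₁).trans_le (hp.trans_eq (r.sup_biUnion hp₂).symm))
    refine ⟨Q', r.comp r', ?_⟩
    simp only [forall_mem_insert, Refinement.biUnion_comp]
    exact ⟨hr', fun q hq => biUnion_subset_biUnion_of_subset_left _ (hr q hq)⟩

theorem IsDistribSup.exists_refinement_step (hS : IsDistribSup S) (P : Stage S) (s : S) :
    ∃ (Q : Stage S) (r : Refinement P Q),
      (∀ A ⊆ P.atoms, ∀ B ⊆ P.atoms, A.sup P.val ≤ B.sup P.val →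
        A.biUnion r.map ⊆ B.biUnion r.map) ∧
      ∃ x ∈ Q.atoms, Q.val x = s := by
  classical
  obtain ⟨Q, r, hr⟩ := hS.exists_refinement_forall_biUnion_subset P
    ((P.atoms.powerset ×ˢ P.atoms.powerset).filter fun p => p.1.sup P.val ≤ p.2.sup P.val)
    (by simp +contextual)
  obtain ⟨a, ha⟩ := Infinite.exists_notMem_finset Q.atoms
  have hne {x y} (hy : y ∈ r.map x) : y ≠ a := ne_of_mem_of_not_mem (r.map_subset x hy) ha
  refine ⟨⟨insert a Q.atoms, Function.update Q.val a s⟩,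
    ⟨r.map, fun x => (r.map_subset x).trans (subset_insert a _), fun x hx => ?_⟩,
    fun A hA B hB hAB => hr (A, B) (mem_filter.2 ⟨by simp [hA, hB], hAB⟩),
    a, mem_insert_self a _, by simp⟩
  rw [r.val_eq_sup x hx]
  exact sup_congr rfl fun y hy => (Function.update_of_ne (hne hy) _ _).symm

variable (S) in
structure Tower where
  stage : ℕ → Stage S
  step : ∀ n, Refinement (stage n) (stage (n + 1))
  biUnion_subset_of_sup_le : ∀ n, ∀ A ⊆ (stage n).atoms, ∀ B ⊆ (stage n).atoms,
    A.sup (stage n).val ≤ B.sup (stage n).val → A.biUnion (step n).map ⊆ B.biUnion (step n).map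
  exists_val_eq : ∀ s : S, ∃ n, ∃ x ∈ (stage n).atoms, (stage n).val x = s

theorem IsDistribSup.nonempty_tower [Countable S] (hS : IsDistribSup S) : Nonempty (Tower S) := by
  obtain ⟨e, he⟩ := exists_surjective_nat S
  choose Q r hr hQ using hS.exists_refinement_step
  let stage : ℕ → Stage S := fun n => Nat.rec ⟨∅, fun _ => ⊥⟩ (fun n P => Q P (e n)) n
  refine ⟨⟨stage, fun n => r (stage n) (e n), fun n => hr (stage n) (e n), fun s => ?_⟩⟩
  obtain ⟨n, rfl⟩ := he s
  exact ⟨n + 1, hQ (stage n) (e n)⟩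

namespace Tower

variable (T : Tower S)

/-- Every stage space is all of `ℕ →₀ ℚ`, of which only the vectors supported on the atoms of
the stage matter; the transition maps land in those vectors. -/
noncomputable def transition (n : ℕ) : (ℕ →₀ ℚ) →ₗ[ℚ] ℕ →₀ ℚ :=
  Finsupp.linearCombination ℚ fun x => ∑ y ∈ (T.step n).map x, Finsupp.single y 1

theorem transition_apply (n : ℕ) (v : ℕ →₀ ℚ) (y : ℕ) :
    T.transition n v y = ∑ x ∈ v.support, if y ∈ (T.step n).map x then v x else 0 := by
  classical
  simp [transition, Finsupp.linearCombination_apply, Finsupp.sum, Finsupp.finsetSum_apply,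
    Finsupp.single_apply]

variable {T}

theorem transition_nonneg {n : ℕ} {v : ℕ →₀ ℚ} (hv : 0 ≤ v) : 0 ≤ T.transition n v := fun y => by
  rw [transition_apply]
  exact sum_nonneg fun x _ => by split_ifs; exacts [hv x, le_rfl]

theorem support_transition {n : ℕ} {v : ℕ →₀ ℚ} (hv : 0 ≤ v) :
    (T.transition n v).support = v.support.biUnion (T.step n).map := by
  ext y
  rw [Finsupp.mem_support_iff, transition_apply, Ne,
    sum_eq_zero_iff_of_nonneg fun x _ => by split_ifs; exacts [hv x, le_rfl]]
  simp only [not_forall, ite_eq_right_iff, mem_biUnion, Finsupp.mem_support_iff]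
  grind

theorem support_transition_subset (n : ℕ) (v : ℕ →₀ ℚ) :
    (T.transition n v).support ⊆ (T.stage (n + 1)).atoms := fun y hy => by
  by_contra h
  rw [Finsupp.mem_support_iff, transition_apply] at hy
  exact hy (sum_eq_zero fun x _ => if_neg fun hyx => h ((T.step n).map_subset x hyx))

variable (T)

noncomputable def chain {i j : ℕ} (h : i ≤ j) : (ℕ →₀ ℚ) →ₗ[ℚ] ℕ →₀ ℚ :=
  Nat.leRecOn h (fun {k} f => (T.transition k).comp f) LinearMap.id

theorem chain_apply {i j : ℕ} (h : i ≤ j) (v : ℕ →₀ ℚ) :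
    T.chain h v = Nat.leRecOn h (fun {k} => T.transition k) v := by
  induction j, h using Nat.le_induction with
  | base => simp [chain, Nat.leRecOn_self]
  | succ k hk ih =>
    rw [chain, Nat.leRecOn_succ hk, Nat.leRecOn_succ hk, LinearMap.comp_apply, ← chain, ih]

theorem chain_chain {i j k : ℕ} (hij : i ≤ j) (hjk : j ≤ k) (v : ℕ →₀ ℚ) :
    T.chain hjk (T.chain hij v) = T.chain (hij.trans hjk) v := by
  simp only [chain_apply, Nat.leRecOn_trans hij hjk]

theorem chain_induction {p : ℕ → (ℕ →₀ ℚ) → Prop}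
    (hp : ∀ k v, p k v → p (k + 1) (T.transition k v)) {i j : ℕ} (h : i ≤ j) {v : ℕ →₀ ℚ}
    (hv : p i v) : p j (T.chain h v) := by
  rw [chain_apply]
  induction j, h using Nat.le_induction with
  | base => rwa [Nat.leRecOn_self]
  | succ k hk ih => rw [Nat.leRecOn_succ hk]; exact hp _ _ ih

instance : DirectedSystem (fun _ : ℕ => ℕ →₀ ℚ) fun _ _ h => T.chain h where
  map_self i v := by rw [chain_apply, Nat.leRecOn_self]
  map_map _ _ _ hij hjk v := T.chain_chain hij hjk v

abbrev Lim : Type := Module.DirectLimit (fun _ : ℕ => ℕ →₀ ℚ) fun _ _ h => T.chain h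

noncomputable abbrev toLim (n : ℕ) : (ℕ →₀ ℚ) →ₗ[ℚ] T.Lim :=
  Module.DirectLimit.of ℚ ℕ (fun _ : ℕ => ℕ →₀ ℚ) (fun _ _ h => T.chain h) n

theorem toLim_chain {i j : ℕ} (h : i ≤ j) (v : ℕ →₀ ℚ) : T.toLim j (T.chain h v) = T.toLim i v :=
  Module.DirectLimit.of_f

theorem toLim_transition (n : ℕ) (v : ℕ →₀ ℚ) :
    T.toLim (n + 1) (T.transition n v) = T.toLim n v := by
  rw [← T.toLim_chain n.le_succ, chain_apply, Nat.leRecOn_succ']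

instance : Countable T.Lim :=
  Function.Surjective.countable (f := fun p : Σ _ : ℕ, ℕ →₀ ℚ => T.toLim p.1 p.2) fun z =>
    (Module.DirectLimit.exists_of z).elim fun n ⟨v, hv⟩ => ⟨⟨n, v⟩, hv⟩

def cone (n : ℕ) : PointedCone ℚ (ℕ →₀ ℚ) where
  carrier := {v | 0 ≤ v ∧ v.support ⊆ (T.stage n).atoms}
  zero_mem' := ⟨le_rfl, by simp⟩
  add_mem' hv hw := ⟨add_nonneg hv.1 hw.1, Finsupp.support_add.trans (union_subset hv.2 hw.2)⟩
  smul_mem' c _ hv := ⟨smul_nonneg c.2 hv.1, Finsupp.support_smul.trans hv.2⟩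

variable {T}

theorem mem_cone_of_le {n : ℕ} {v w : ℕ →₀ ℚ} (hv : 0 ≤ v) (hvw : v ≤ w) (hw : w ∈ T.cone n) :
    v ∈ T.cone n := by
  refine ⟨hv, fun y hy => hw.2 (Finsupp.mem_support_iff.2 fun hwy => ?_)⟩
  exact Finsupp.mem_support_iff.1 hy (le_antisymm (hwy ▸ hvw y) (hv y))

theorem transition_mem_cone {n : ℕ} {v : ℕ →₀ ℚ} (hv : v ∈ T.cone n) :
    T.transition n v ∈ T.cone (n + 1) :=
  ⟨transition_nonneg hv.1, support_transition_subset n v⟩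

theorem chain_mem_cone {i j : ℕ} (h : i ≤ j) {v : ℕ →₀ ℚ} (hv : v ∈ T.cone i) :
    T.chain h v ∈ T.cone j :=
  T.chain_induction (p := fun k w => w ∈ T.cone k) (fun _ _ => transition_mem_cone) h hv

variable (T)

def limCone : PointedCone ℚ T.Lim where
  carrier := {z | ∃ n, ∃ v ∈ T.cone n, T.toLim n v = z}
  zero_mem' := ⟨0, 0, zero_mem _, map_zero _⟩
  add_mem' := by
    rintro _ _ ⟨i, v, hv, rfl⟩ ⟨j, w, hw, rfl⟩
    refine ⟨max i j, T.chain (le_max_left i j) v + T.chain (le_max_right i j) w,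
      add_mem (chain_mem_cone _ hv) (chain_mem_cone _ hw), ?_⟩
    rw [map_add, toLim_chain, toLim_chain]
  smul_mem' := by
    rintro c _ ⟨n, v, hv, rfl⟩
    exact ⟨n, c • v, Submodule.smul_mem _ c hv, LinearMap.map_smul_of_tower _ _ _⟩

variable {T}

theorem toLim_mem_limCone {n : ℕ} {v : ℕ →₀ ℚ} (hv : v ∈ T.cone n) : T.toLim n v ∈ T.limCone :=
  ⟨n, v, hv, rfl⟩

theorem eventually_exists_toLim_eq {z : T.Lim} (hz : z ∈ T.limCone) :
    ∀ᶠ n in Filter.atTop, ∃ v ∈ T.cone n, T.toLim n v = z := by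
  obtain ⟨i, v, hv, rfl⟩ := hz
  exact Filter.eventually_atTop.2 ⟨i, fun n hin => ⟨_, chain_mem_cone hin hv, T.toLim_chain hin v⟩⟩

theorem exists_chain_eq {i j : ℕ} {v w : ℕ →₀ ℚ} (h : T.toLim i v = T.toLim j w) :
    ∃ k, ∃ (hi : i ≤ k) (hj : j ≤ k), T.chain hi v = T.chain hj w := by
  rw [← T.toLim_chain (le_max_left i j), ← T.toLim_chain (le_max_right i j)] at h
  obtain ⟨k, hk, hkeq⟩ := Module.DirectLimit.exists_eq_of_of_eq h
  exact ⟨k, _, _, by simpa only [chain_chain] using hkeq⟩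

variable (T)

def nuAt (n : ℕ) (v : ℕ →₀ ℚ) : S := v.support.sup (T.stage n).val

variable {T}

theorem nuAt_add {n : ℕ} {v w : ℕ →₀ ℚ} (hv : 0 ≤ v) (hw : 0 ≤ w) :
    T.nuAt n (v + w) = T.nuAt n v ⊔ T.nuAt n w := by
  classical
  rw [nuAt, Finsupp.support_add_of_nonneg hv hw, sup_union]
  rfl

theorem nuAt_chain {i j : ℕ} (h : i ≤ j) {v : ℕ →₀ ℚ} (hv : v ∈ T.cone i) :
    T.nuAt j (T.chain h v) = T.nuAt i v := by
  refine (T.chain_induction (p := fun k w => w ∈ T.cone k ∧ T.nuAt k w = T.nuAt i v)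
    (fun k w hw => ⟨transition_mem_cone hw.1, ?_⟩) h ⟨hv, rfl⟩).2
  rw [← hw.2, nuAt, support_transition hw.1.1, (T.step k).sup_biUnion hw.1.2, nuAt]

theorem nuAt_eq_of_toLim_eq {i j : ℕ} {v w : ℕ →₀ ℚ} (hv : v ∈ T.cone i) (hw : w ∈ T.cone j)
    (h : T.toLim i v = T.toLim j w) : T.nuAt i v = T.nuAt j w := by
  obtain ⟨k, hi, hj, hk⟩ := exists_chain_eq h
  rw [← nuAt_chain hi hv, hk, nuAt_chain hj hw]

variable (T)

open Classical in
noncomputable def nu (z : T.Lim) : S :=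
  if h : z ∈ T.limCone then T.nuAt h.choose h.choose_spec.choose else ⊥

variable {T}

theorem nu_toLim {n : ℕ} {v : ℕ →₀ ℚ} (hv : v ∈ T.cone n) : T.nu (T.toLim n v) = T.nuAt n v := by
  have h := toLim_mem_limCone hv
  rw [nu, dif_pos h]
  exact nuAt_eq_of_toLim_eq h.choose_spec.choose_spec.1 hv h.choose_spec.choose_spec.2

theorem nu_add {x y : T.Lim} (hx : x ∈ T.limCone) (hy : y ∈ T.limCone) :
    T.nu (x + y) = T.nu x ⊔ T.nu y := by
  obtain ⟨n, ⟨v, hv, rfl⟩, w, hw, rfl⟩ :=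
    ((eventually_exists_toLim_eq hx).and (eventually_exists_toLim_eq hy)).exists
  rw [← map_add, nu_toLim (add_mem hv hw), nu_toLim hv, nu_toLim hw, nuAt_add hv.1 hw.1]

theorem nu_nsmul {y : T.Lim} (hy : y ∈ T.limCone) {n : ℕ} (hn : 1 ≤ n) : T.nu (n • y) = T.nu y := by
  induction n, hn using Nat.le_induction with
  | base => rw [one_nsmul]
  | succ n _ ih => rw [succ_nsmul, nu_add (nsmul_mem hy n) hy, ih, sup_idem]

theorem exists_nsmul_sub_mem_of_nu_le {x y : T.Lim} (hx : x ∈ T.limCone) (hy : y ∈ T.limCone)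
    (h : T.nu x ≤ T.nu y) : ∃ n : ℕ, 1 ≤ n ∧ n • y - x ∈ T.limCone := by
  obtain ⟨k, ⟨v, hv, rfl⟩, w, hw, rfl⟩ :=
    ((eventually_exists_toLim_eq hx).and (eventually_exists_toLim_eq hy)).exists
  rw [nu_toLim hv, nu_toLim hw] at h
  -- `ν x ≤ ν y` becomes an inclusion of supports only one stage later.
  have hsupp : (T.transition k v).support ⊆ (T.transition k w).support := by
    rw [support_transition hv.1, support_transition hw.1]
    exact T.biUnion_subset_of_sup_le k _ hv.2 _ hw.2 h
  obtain ⟨n, hle, hn⟩ := ((Finsupp.eventually_le_nsmul_of_support_subset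
    (transition_nonneg hw.1) hsupp).and (Filter.eventually_ge_atTop 1)).exists
  refine ⟨n, hn, k + 1, n • T.transition k w - T.transition k v,
    mem_cone_of_le (sub_nonneg.2 hle) (sub_le_self _ (transition_nonneg hv.1))
      (nsmul_mem (transition_mem_cone hw) n), ?_⟩
  rw [map_sub, map_nsmul, toLim_transition, toLim_transition]

theorem nu_le_nu_iff {x y : T.Lim} (hx : x ∈ T.limCone) (hy : y ∈ T.limCone) :
    T.nu x ≤ T.nu y ↔ ∃ n : ℕ, 1 ≤ n ∧ n • y - x ∈ T.limCone := by
  refine ⟨exists_nsmul_sub_mem_of_nu_le hx hy, fun ⟨n, hn, hyx⟩ => ?_⟩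
  calc T.nu x ≤ T.nu x ⊔ T.nu (n • y - x) := le_sup_left
    _ = T.nu (n • y) := by rw [← nu_add hx hyx, add_sub_cancel]
    _ = T.nu y := nu_nsmul hy hn

theorem eq_zero_of_mem_limCone_of_neg_mem {z : T.Lim} (hz : z ∈ T.limCone)
    (hz' : -z ∈ T.limCone) : z = 0 := by
  obtain ⟨n, ⟨v, hv, rfl⟩, w, hw, hvw⟩ :=
    ((eventually_exists_toLim_eq hz).and (eventually_exists_toLim_eq hz')).exists
  rw [eq_neg_iff_add_eq_zero, ← map_add] at hvw
  obtain ⟨k, hk, h0⟩ := Module.DirectLimit.of.zero_exact hvw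
  rw [map_add, add_eq_zero_iff_of_nonneg (chain_mem_cone hk hw).1 (chain_mem_cone hk hv).1] at h0
  rw [← T.toLim_chain hk, h0.2, map_zero]

theorem exists_sub_eq_of_support_subset {n : ℕ} {v : ℕ →₀ ℚ}
    (hv : v.support ⊆ (T.stage n).atoms) : ∃ p ∈ T.cone n, ∃ q ∈ T.cone n, v = p - q := by
  have h {w : ℕ →₀ ℚ} (hw : w.support ⊆ v.support) : w ⊔ 0 ∈ T.cone n := by
    refine ⟨le_sup_right, fun y hy => hv (hw ?_)⟩
    contrapose! hy
    simp [Finsupp.notMem_support_iff.1 hy]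
  exact ⟨v⁺, h subset_rfl, v⁻, h (Finsupp.support_neg v).le, (posPart_sub_negPart v).symm⟩

theorem exists_sub_eq (z : T.Lim) : ∃ p ∈ T.limCone, ∃ q ∈ T.limCone, z = p - q := by
  obtain ⟨n, v, rfl⟩ := Module.DirectLimit.exists_of z
  obtain ⟨p, hp, q, hq, hpq⟩ := exists_sub_eq_of_support_subset (T.support_transition_subset n v)
  exact ⟨_, toLim_mem_limCone hp, _, toLim_mem_limCone hq, by
    rw [← map_sub, ← hpq, toLim_transition]⟩

theorem exists_refinement_of_mem_cone {n : ℕ} {a₀ a₁ b₀ b₁ : ℕ →₀ ℚ} (ha₀ : a₀ ∈ T.cone n)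
    (ha₁ : a₁ ∈ T.cone n) (hb₀ : b₀ ∈ T.cone n) (hb₁ : b₁ ∈ T.cone n) (h : a₀ + a₁ = b₀ + b₁) :
    ∃ c₀₀ ∈ T.cone n, ∃ c₀₁ ∈ T.cone n, ∃ c₁₀ ∈ T.cone n, ∃ c₁₁ ∈ T.cone n,
      a₀ = c₀₀ + c₀₁ ∧ a₁ = c₁₀ + c₁₁ ∧ b₀ = c₀₀ + c₁₀ ∧ b₁ = c₀₁ + c₁₁ := by
  obtain ⟨c₀₀, c₀₁, c₁₀, c₁₁, h₀₀, h₀₁, h₁₀, h₁₁, e₀, e₁, e₂, e₃⟩ :=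
    exists_refinement_of_add_eq ha₀.1 ha₁.1 hb₀.1 hb₁.1 h
  exact ⟨c₀₀, mem_cone_of_le h₀₀ (e₀ ▸ le_add_of_nonneg_right h₀₁) ha₀,
    c₀₁, mem_cone_of_le h₀₁ (e₀ ▸ le_add_of_nonneg_left h₀₀) ha₀,
    c₁₀, mem_cone_of_le h₁₀ (e₁ ▸ le_add_of_nonneg_right h₁₁) ha₁,
    c₁₁, mem_cone_of_le h₁₁ (e₁ ▸ le_add_of_nonneg_left h₁₀) ha₁, e₀, e₁, e₂, e₃⟩

theorem exists_refinement_of_mem_limCone {f₀ f₁ g₀ g₁ : T.Lim} (hf₀ : f₀ ∈ T.limCone)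
    (hf₁ : f₁ ∈ T.limCone) (hg₀ : g₀ ∈ T.limCone) (hg₁ : g₁ ∈ T.limCone)
    (h : f₀ + f₁ = g₀ + g₁) :
    ∃ h₀₀ ∈ T.limCone, ∃ h₀₁ ∈ T.limCone, ∃ h₁₀ ∈ T.limCone, ∃ h₁₁ ∈ T.limCone,
      f₀ = h₀₀ + h₀₁ ∧ f₁ = h₁₀ + h₁₁ ∧ g₀ = h₀₀ + h₁₀ ∧ g₁ = h₀₁ + h₁₁ := by
  obtain ⟨n, ⟨a₀, ha₀, rfl⟩, ⟨a₁, ha₁, rfl⟩, ⟨b₀, hb₀, rfl⟩, b₁, hb₁, rfl⟩ :=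
    ((eventually_exists_toLim_eq hf₀).and <| (eventually_exists_toLim_eq hf₁).and <|
      (eventually_exists_toLim_eq hg₀).and (eventually_exists_toLim_eq hg₁)).exists
  rw [← map_add, ← map_add] at h
  obtain ⟨k, hk, hchain⟩ := Module.DirectLimit.exists_eq_of_of_eq h
  rw [map_add, map_add] at hchain
  obtain ⟨c₀₀, h₀₀, c₀₁, h₀₁, c₁₀, h₁₀, c₁₁, h₁₁, e₀, e₁, e₂, e₃⟩ :=
    exists_refinement_of_mem_cone (chain_mem_cone hk ha₀) (chain_mem_cone hk ha₁)
      (chain_mem_cone hk hb₀) (chain_mem_cone hk hb₁) hchain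
  refine ⟨_, toLim_mem_limCone h₀₀, _, toLim_mem_limCone h₀₁, _, toLim_mem_limCone h₁₀, _,
    toLim_mem_limCone h₁₁, ?_, ?_, ?_, ?_⟩ <;>
  simp only [← map_add, ← e₀, ← e₁, ← e₂, ← e₃, toLim_chain]

theorem exists_nu_eq (s : S) : ∃ z ∈ T.limCone, T.nu z = s := by
  obtain ⟨n, x, hx, rfl⟩ := T.exists_val_eq s
  have hmem : Finsupp.single x 1 ∈ T.cone n := ⟨by simp, by simpa using hx⟩
  exact ⟨_, toLim_mem_limCone hmem, by simp [nu_toLim hmem, nuAt]⟩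

variable (T)

noncomputable def coneRep : ConeRep S where
  E := T.Lim
  pos := T.limCone
  nu := T.nu
  zero_mem := zero_mem _
  add_mem _ hx _ hy := add_mem hx hy
  smul_mem _ hq _ hx := T.limCone.smul_mem hq hx
  pos_antisymm _ := eq_zero_of_mem_limCone_of_neg_mem
  generating := exists_sub_eq
  refinement _ hf₀ _ hf₁ _ hg₀ _ hg₁ := exists_refinement_of_mem_limCone hf₀ hf₁ hg₀ hg₁
  surj := exists_nu_eq
  map_add _ hx _ hy := nu_add hx hy
  le_iff _ hx _ hy := nu_le_nu_iff hx hy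

end Tower

end

/-- Every countable distributive `0`-semilattice `S` is isomorphic to the maximal
semilattice quotient of the positive cone of a countable dimension vector space `E`;
moreover, if `S` has a greatest element then `E⁺` contains an order-unit of `E`. -/
theorem stmt15 (S : Type*) [SemilatticeSup S] [OrderBot S] [Countable S]
    (hdist : ∀ a b₀ b₁ : S, a ≤ b₀ ⊔ b₁ →
      ∃ a₀ a₁ : S, a = a₀ ⊔ a₁ ∧ a₀ ≤ b₀ ∧ a₁ ≤ b₁) :
    ∃ R : ConeRep S, Countable R.E ∧
      ((∃ t : S, ∀ s : S, s ≤ t) →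
        ∃ u ∈ R.pos, ∀ x : R.E, ∃ n : ℕ, 1 ≤ n ∧ n • u - x ∈ R.pos) := by
  obtain ⟨T⟩ := IsDistribSup.nonempty_tower hdist
  exact ⟨T.coneRep, inferInstanceAs (Countable T.Lim), fun ⟨_, ht⟩ => T.coneRep.exists_orderUnit ht⟩
end

section
/- Let S be a nonempty distributive join-semilattice, let m and n be natural numbers, and let aᵢ, bᵢ (for i < m) and cⱼ (for j < n) be elements of S such that aᵢ ≤ bᵢ ⊔ cⱼ for all i < m and j < n. Then there exists x ∈ S such that aᵢ ≤ bᵢ ⊔ x for all i < m and x ≤ cⱼ for all j < n. -/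
/-- In a nonempty distributive join-semilattice, given `aᵢ ≤ bᵢ ⊔ cⱼ` for all `i < m`,
`j < n`, there is an `x` with `aᵢ ≤ bᵢ ⊔ x` for all `i` and `x ≤ cⱼ` for all `j`. -/
theorem stmt16 (S : Type*) [SemilatticeSup S] [Nonempty S]
    (hdist : ∀ a b₀ b₁ : S, a ≤ b₀ ⊔ b₁ →
      ∃ a₀ a₁ : S, a = a₀ ⊔ a₁ ∧ a₀ ≤ b₀ ∧ a₁ ≤ b₁)
    (m n : ℕ) (a b : Fin m → S) (c : Fin n → S)
    (h : ∀ (i : Fin m) (j : Fin n), a i ≤ b i ⊔ c j) :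
    ∃ x : S, (∀ i : Fin m, a i ≤ b i ⊔ x) ∧ (∀ j : Fin n, x ≤ c j) := by
  induction n with
  | zero =>
    rcases m with _ | m
    · exact ⟨Classical.arbitrary S, fun i => i.elim0, fun j => j.elim0⟩
    · refine ⟨Finset.univ.sup' Finset.univ_nonempty a, fun i => ?_, fun j => j.elim0⟩
      exact le_trans (Finset.le_sup' a (Finset.mem_univ i)) le_sup_right
  | succ n ih =>
    obtain ⟨x, hx1, hx2⟩ := ih (fun j => c j.castSucc) (fun i j => h i j.castSucc)
    obtain ⟨p, q, hpq, hp, hq⟩ := hdist x x (c (Fin.last n)) le_sup_left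
    have hqx : q ≤ x := hpq ▸ le_sup_right
    rcases m with _ | m
    · refine ⟨q, fun i => i.elim0, fun j => ?_⟩
      refine Fin.lastCases hq (fun j => le_trans hqx (hx2 j)) j
    · have H : ∀ i : Fin (m + 1), ∃ v : S, v ≤ x ∧ v ≤ c (Fin.last n) ∧ a i ≤ b i ⊔ v := by
        intro i
        obtain ⟨a0, a1, h1, h2, h3⟩ := hdist (a i) (b i) (c (Fin.last n)) (h i (Fin.last n))
        obtain ⟨u, v, h4, h5, h6⟩ := hdist a1 (b i) x (le_trans (h1 ▸ le_sup_right) (hx1 i))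
        refine ⟨v, h6, le_trans (h4 ▸ le_sup_right) h3, ?_⟩
        rw [h1, h4]
        exact sup_le (h2.trans le_sup_left)
          (sup_le (h5.trans le_sup_left) le_sup_right)
      choose v hv1 hv2 hv3 using H
      refine ⟨Finset.univ.sup' Finset.univ_nonempty v, fun i => ?_, fun j => ?_⟩
      · exact le_trans (hv3 i) (sup_le_sup_left (Finset.le_sup' v (Finset.mem_univ i)) _)
      · refine Fin.lastCases ?_ (fun j => ?_) j
        · exact Finset.sup'_le _ _ fun i _ => hv2 i
        · exact Finset.sup'_le _ _ fun i _ => (hv1 i).trans (hx2 j)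
end

section
/- Let S be a distributive join-semilattice, let B be a finite join-semilattice, and let A ⊆ B be a nonempty subset closed under the join of B (a subsemilattice, with the induced order). Then every map f : A → S satisfying f(a ⊔ b) = f(a) ⊔ f(b) for all a, b ∈ A extends to a map g : B → S satisfying g(a ⊔ b) = g(a) ⊔ g(b) for all a, b ∈ B and g(a) = f(a) for all a ∈ A. -/
private lemma interp17 {S : Type*} [SemilatticeSup S]
    (hdist : ∀ a b₀ b₁ : S, a ≤ b₀ ⊔ b₁ →
      ∃ a₀ a₁ : S, a = a₀ ⊔ a₁ ∧ a₀ ≤ b₀ ∧ a₁ ≤ b₁)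
    (D : Finset S) (t v : S) (h : ∀ u ∈ D, t ≤ u ⊔ v) :
    ∃ x : S, (∀ u ∈ D, x ≤ u) ∧ t ≤ x ⊔ v := by
  classical
  induction D using Finset.induction_on with
  | empty => exact ⟨t, by simp, le_sup_left⟩
  | @insert u D hu ih =>
    obtain ⟨x, hx, htx⟩ := ih (fun w hw => h w (Finset.mem_insert_of_mem hw))
    obtain ⟨p, q, hpq, hp, hq⟩ := hdist t u v (h u (Finset.mem_insert_self u D))
    have hpt : p ≤ x ⊔ v := by
      have : p ≤ t := by rw [hpq]; exact le_sup_left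
      exact this.trans htx
    obtain ⟨p₁, p₂, hp12, hp1, hp2⟩ := hdist p x v hpt
    have hp1p : p₁ ≤ p := by rw [hp12]; exact le_sup_left
    refine ⟨p₁, ?_, ?_⟩
    · intro w hw
      rcases Finset.mem_insert.mp hw with rfl | hw'
      · exact hp1p.trans hp
      · exact hp1.trans (hx w hw')
    · have heq : t = p₁ ⊔ (p₂ ⊔ q) := by rw [hpq, hp12, sup_assoc]
      rw [heq]
      exact sup_le le_sup_left ((sup_le hp2 hq).trans le_sup_right)

private theorem aux17 (S B : Type*) [SemilatticeSup S] [SemilatticeSup B] [Fintype B]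
    (hdist : ∀ a b₀ b₁ : S, a ≤ b₀ ⊔ b₁ →
      ∃ a₀ a₁ : S, a = a₀ ⊔ a₁ ∧ a₀ ≤ b₀ ∧ a₁ ≤ b₁) :
    ∀ (n : ℕ) (A : Set B) (hA_sup : ∀ x ∈ A, ∀ y ∈ A, x ⊔ y ∈ A),
      Aᶜ.ncard ≤ n → A.Nonempty →
      ∀ (f : A → S),
        (∀ a b : A, f ⟨(a : B) ⊔ (b : B), hA_sup a a.2 b b.2⟩ = f a ⊔ f b) →
        ∃ g : B → S, (∀ x y : B, g (x ⊔ y) = g x ⊔ g y) ∧ ∀ a : A, g (a : B) = f a := by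
  intro n
  induction n using Nat.strong_induction_on with
  | _ n ih =>
  intro A hA_sup hcard hne f hf
  classical
  by_cases hAc : Aᶜ.Nonempty
  case neg =>
    have hall : ∀ x : B, x ∈ A := by
      intro x; by_contra h; exact hAc ⟨x, h⟩
    exact ⟨fun x => f ⟨x, hall x⟩, fun x y => hf ⟨x, hall x⟩ ⟨y, hall y⟩, fun a => rfl⟩
  case pos =>
  obtain ⟨b, hb⟩ := hAc
  haveI : Fintype A := Fintype.ofFinite _
  -- monotonicity of f
  have fmono : ∀ a a' : A, (a : B) ≤ (a' : B) → f a ≤ f a' := by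
    intro a a' h
    have h2 := hf a a'
    have h3 : (⟨(a : B) ⊔ (a' : B), hA_sup a a.2 a' a'.2⟩ : A) = a' :=
      Subtype.ext (sup_eq_right.2 h)
    rw [h3] at h2
    exact le_sup_left.trans h2.ge
  -- construction of s
  have hs : ∃ s : S, (∀ d : A, b ≤ (d : B) → s ≤ f d) ∧
      (∀ a a' : A, (a' : B) ≤ b ⊔ (a : B) → f a' ≤ s ⊔ f a) := by
    set Df : Finset S := (Finset.univ.filter (fun d : A => b ≤ (d : B))).image f with hDf
    have hchoice : ∀ p : A × A, ∃ x : S, (∀ u ∈ Df, x ≤ u) ∧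
        ((p.2 : B) ≤ b ⊔ (p.1 : B) → f p.2 ≤ x ⊔ f p.1) := by
      intro p
      by_cases hc : (p.2 : B) ≤ b ⊔ (p.1 : B)
      · have hprem : ∀ u ∈ Df, f p.2 ≤ u ⊔ f p.1 := by
          intro u hu
          obtain ⟨d, hd, rfl⟩ := Finset.mem_image.mp hu
          have hd' : b ≤ (d : B) := (Finset.mem_filter.mp hd).2
          have hle : (p.2 : B) ≤ (d : B) ⊔ (p.1 : B) := hc.trans (sup_le_sup_right hd' _)
          have h4 := fmono p.2 ⟨(d : B) ⊔ (p.1 : B), hA_sup d d.2 p.1 p.1.2⟩ hle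
          have h5 := hf d p.1
          rw [h5] at h4
          exact h4
        obtain ⟨x, hx1, hx2⟩ := interp17 hdist Df (f p.2) (f p.1) hprem
        exact ⟨x, hx1, fun _ => hx2⟩
      · rcases Finset.eq_empty_or_nonempty Df with h | ⟨u₀, hu₀⟩
        · exact ⟨f p.2, by simp [h], fun hcc => absurd hcc hc⟩
        · obtain ⟨x, hx1, hx2⟩ := interp17 hdist Df u₀ u₀ (fun u hu => le_sup_right)
          exact ⟨x, hx1, fun hcc => absurd hcc hc⟩
    choose X hX1 hX2 using hchoice
    set P : Finset (A × A) := Finset.univ.filter (fun p : A × A => (p.2 : B) ≤ b ⊔ (p.1 : B))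
      with hP
    have hPne : P.Nonempty := by
      obtain ⟨a₀, ha₀⟩ := hne
      exact ⟨(⟨a₀, ha₀⟩, ⟨a₀, ha₀⟩),
        Finset.mem_filter.2 ⟨Finset.mem_univ _, le_sup_right⟩⟩
    refine ⟨P.sup' hPne X, ?_, ?_⟩
    · intro d hd
      refine Finset.sup'_le _ _ (fun p hp => hX1 p (f d) ?_)
      exact Finset.mem_image.2 ⟨d, Finset.mem_filter.2 ⟨Finset.mem_univ _, hd⟩, rfl⟩
    · intro a a' h
      have hmem : (a, a') ∈ P := Finset.mem_filter.2 ⟨Finset.mem_univ _, h⟩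
      exact (hX2 (a, a') h).trans (sup_le_sup_right (Finset.le_sup' X hmem) _)
  obtain ⟨s, hsI, hsII⟩ := hs
  -- dx
  set dx : B → S := fun x =>
    (insert s ((Finset.univ.filter (fun a : A => (a : B) ≤ x)).image f)).sup'
      (Finset.insert_nonempty _ _) id with hdxdef
  have h_s_le : ∀ x : B, s ≤ dx x := fun x =>
    Finset.le_sup' id (Finset.mem_insert_self _ _)
  have h_f_le : ∀ (a : A) (x : B), (a : B) ≤ x → f a ≤ dx x := fun a x h =>
    Finset.le_sup' id (Finset.mem_insert_of_mem
      (Finset.mem_image.2 ⟨a, Finset.mem_filter.2 ⟨Finset.mem_univ _, h⟩, rfl⟩))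
  have h_dx_le : ∀ (x : B) (e : S), s ≤ e → (∀ a : A, (a : B) ≤ x → f a ≤ e) → dx x ≤ e := by
    intro x e hse hae
    refine Finset.sup'_le _ _ (fun u hu => ?_)
    rcases Finset.mem_insert.mp hu with rfl | hu'
    · exact hse
    · obtain ⟨a, ha, rfl⟩ := Finset.mem_image.mp hu'
      exact hae a (Finset.mem_filter.mp ha).2
  have h_dx_mono : ∀ x y : B, x ≤ y → dx x ≤ dx y := fun x y h =>
    h_dx_le x (dx y) (h_s_le y) (fun a ha => h_f_le a y (ha.trans h))
  -- the extended subsemilattice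
  set A' : Set B := {x | x ∈ A ∨ x = b ∨ ∃ a : A, x = b ⊔ (a : B)} with hA'def
  have hAsub : A ⊆ A' := fun x hx => Or.inl hx
  have hbA' : b ∈ A' := Or.inr (Or.inl rfl)
  have hblex : ∀ x ∈ A', x ∉ A → b ≤ x := by
    intro x hx hxA
    rcases hx with h | rfl | ⟨a, rfl⟩
    · exact absurd h hxA
    · exact le_rfl
    · exact le_sup_left
  have hsup' : ∀ x ∈ A', ∀ y ∈ A', x ⊔ y ∈ A' := by
    intro x hx y hy
    rcases hx with hx | hx | ⟨a, hx⟩ <;> rcases hy with hy | hy | ⟨a₂, hy⟩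
    · exact Or.inl (hA_sup x hx y hy)
    · rw [hy]; exact Or.inr (Or.inr ⟨⟨x, hx⟩, sup_comm x b⟩)
    · rw [hy]
      exact Or.inr (Or.inr ⟨⟨x ⊔ (a₂ : B), hA_sup x hx a₂ a₂.2⟩, by
        show x ⊔ (b ⊔ (a₂ : B)) = b ⊔ (x ⊔ (a₂ : B)); ac_rfl⟩)
    · rw [hx]; exact Or.inr (Or.inr ⟨⟨y, hy⟩, rfl⟩)
    · rw [hx, hy]; exact Or.inr (Or.inl (sup_idem b))
    · rw [hx, hy]; exact Or.inr (Or.inr ⟨a₂, by rw [← sup_assoc, sup_idem]⟩)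
    · rw [hx]
      exact Or.inr (Or.inr ⟨⟨(a : B) ⊔ y, hA_sup a a.2 y hy⟩, by
        show (b ⊔ (a : B)) ⊔ y = b ⊔ ((a : B) ⊔ y); ac_rfl⟩)
    · rw [hx, hy]
      exact Or.inr (Or.inr ⟨a, by
        show (b ⊔ (a : B)) ⊔ b = b ⊔ (a : B); rw [sup_comm, ← sup_assoc, sup_idem]⟩)
    · rw [hx, hy]
      exact Or.inr (Or.inr ⟨⟨(a : B) ⊔ (a₂ : B), hA_sup a a.2 a₂ a₂.2⟩, by
        show (b ⊔ (a : B)) ⊔ (b ⊔ (a₂ : B)) = b ⊔ ((a : B) ⊔ (a₂ : B)); ac_rfl⟩)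
  -- the key inequality
  have hK : ∀ x ∈ A', ∀ y ∈ A', ∀ a' : A, (a' : B) ≤ x ⊔ y → f a' ≤ dx x ⊔ dx y := by
    intro x hx y hy a' hle
    rcases hx with hx | hx | ⟨a, hx⟩ <;> rcases hy with hy | hy | ⟨a₂, hy⟩
    · -- x ∈ A, y ∈ A
      have h1 := fmono a' ⟨x ⊔ y, hA_sup x hx y hy⟩ hle
      have h2 := hf ⟨x, hx⟩ ⟨y, hy⟩
      rw [h2] at h1
      exact h1.trans (sup_le_sup (h_f_le _ _ le_rfl) (h_f_le _ _ le_rfl))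
    · -- x ∈ A, y = b
      rw [hy] at hle ⊢
      have h1 : (a' : B) ≤ b ⊔ x := hle.trans_eq (sup_comm x b)
      have h2 := hsII ⟨x, hx⟩ a' h1
      exact h2.trans (sup_le ((h_s_le b).trans le_sup_right)
        ((h_f_le _ _ le_rfl).trans le_sup_left))
    · -- x ∈ A, y = b ⊔ a₂
      rw [hy] at hle ⊢
      have h1 : (a' : B) ≤ b ⊔ (x ⊔ (a₂ : B)) := by
        refine hle.trans (le_of_eq ?_); ac_rfl
      have h2 := hsII ⟨x ⊔ (a₂ : B), hA_sup x hx a₂ a₂.2⟩ a' h1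
      have h3 := hf ⟨x, hx⟩ a₂
      rw [h3] at h2
      refine h2.trans (sup_le ((h_s_le _).trans le_sup_right) (sup_le
        ((h_f_le _ _ le_rfl).trans le_sup_left)
        ((h_f_le a₂ (b ⊔ (a₂ : B)) le_sup_right).trans le_sup_right)))
    · -- x = b, y ∈ A
      rw [hx] at hle ⊢
      have h2 := hsII ⟨y, hy⟩ a' hle
      exact h2.trans (sup_le ((h_s_le b).trans le_sup_left)
        ((h_f_le _ _ le_rfl).trans le_sup_right))
    · -- x = b, y = b
      rw [hx] at hle ⊢; rw [hy] at hle ⊢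
      have h1 : (a' : B) ≤ b := by simpa using hle
      exact (h_f_le a' b h1).trans le_sup_left
    · -- x = b, y = b ⊔ a₂
      rw [hx] at hle ⊢; rw [hy] at hle ⊢
      have h1 : (a' : B) ≤ b ⊔ (a₂ : B) := by
        refine hle.trans (le_of_eq ?_); rw [← sup_assoc, sup_idem]
      have h2 := hsII a₂ a' h1
      exact h2.trans (sup_le ((h_s_le b).trans le_sup_left)
        ((h_f_le a₂ _ le_sup_right).trans le_sup_right))
    · -- x = b ⊔ a, y ∈ A
      rw [hx] at hle ⊢
      have h1 : (a' : B) ≤ b ⊔ ((a : B) ⊔ y) := by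
        refine hle.trans (le_of_eq ?_); ac_rfl
      have h2 := hsII ⟨(a : B) ⊔ y, hA_sup a a.2 y hy⟩ a' h1
      have h3 := hf a ⟨y, hy⟩
      rw [h3] at h2
      refine h2.trans (sup_le ((h_s_le _).trans le_sup_left) (sup_le
        ((h_f_le a _ le_sup_right).trans le_sup_left)
        ((h_f_le _ _ le_rfl).trans le_sup_right)))
    · -- x = b ⊔ a, y = b
      rw [hx] at hle ⊢; rw [hy] at hle ⊢
      have h1 : (a' : B) ≤ b ⊔ (a : B) := by
        refine hle.trans (le_of_eq ?_); rw [sup_comm, ← sup_assoc]; rw [sup_idem]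
      have h2 := hsII a a' h1
      exact h2.trans (sup_le ((h_s_le b).trans le_sup_right)
        ((h_f_le a _ le_sup_right).trans le_sup_left))
    · -- x = b ⊔ a, y = b ⊔ a₂
      rw [hx] at hle ⊢; rw [hy] at hle ⊢
      have h1 : (a' : B) ≤ b ⊔ ((a : B) ⊔ (a₂ : B)) := by
        refine hle.trans (le_of_eq ?_); ac_rfl
      have h2 := hsII ⟨(a : B) ⊔ (a₂ : B), hA_sup a a.2 a₂ a₂.2⟩ a' h1
      have h3 := hf a a₂
      rw [h3] at h2
      refine h2.trans (sup_le ((h_s_le _).trans le_sup_left) (sup_le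
        ((h_f_le a _ le_sup_right).trans le_sup_left)
        ((h_f_le a₂ _ le_sup_right).trans le_sup_right)))
  -- the extension of f
  set e : B → S := fun z => if hz : z ∈ A then f ⟨z, hz⟩ else dx z with hedef
  have he_A : ∀ (z : B) (hz : z ∈ A), e z = f ⟨z, hz⟩ := fun z hz => dif_pos hz
  have he_nA : ∀ z : B, z ∉ A → e z = dx z := fun z hz => dif_neg hz
  have hE : ∀ z ∈ A', s ⊔ e z = dx z := by
    intro z hz
    by_cases hzA : z ∈ A
    · rw [he_A z hzA]
      refine le_antisymm (sup_le (h_s_le z) (h_f_le _ _ le_rfl)) ?_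
      exact h_dx_le z _ le_sup_left (fun a ha => (fmono a ⟨z, hzA⟩ ha).trans le_sup_right)
    · rw [he_nA z hzA, sup_eq_right.2 (h_s_le z)]
  have he_le_dx : ∀ z ∈ A', e z ≤ dx z := fun z hz => le_sup_right.trans (hE z hz).le
  have hle_f : ∀ x ∈ A', ∀ z : A, x ≤ (z : B) → e x ≤ f z := by
    intro x hx z hxz
    by_cases hxA : x ∈ A
    · rw [he_A x hxA]; exact fmono ⟨x, hxA⟩ z hxz
    · rw [he_nA x hxA]
      exact h_dx_le x _ (hsI z ((hblex x hx hxA).trans hxz))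
        (fun a ha => fmono a z (ha.trans hxz))
  have hhom : ∀ x ∈ A', ∀ y ∈ A', e (x ⊔ y) = e x ⊔ e y := by
    intro x hx y hy
    by_cases hboth : x ∈ A ∧ y ∈ A
    · obtain ⟨hxA, hyA⟩ := hboth
      rw [he_A x hxA, he_A y hyA, he_A (x ⊔ y) (hA_sup x hxA y hyA)]
      exact hf ⟨x, hxA⟩ ⟨y, hyA⟩
    · have hnA : x ∉ A ∨ y ∉ A := by tauto
      have hs_exy : s ≤ e x ⊔ e y := by
        rcases hnA with h | h
        · rw [he_nA x h] at *; exact (h_s_le x).trans le_sup_left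
        · rw [he_nA y h] at *; exact (h_s_le y).trans le_sup_right
      have hdxy : dx x ⊔ dx y ≤ e x ⊔ e y := by
        rw [← hE x hx, ← hE y hy]
        exact sup_le (sup_le hs_exy le_sup_left) (sup_le hs_exy le_sup_right)
      by_cases hz : x ⊔ y ∈ A
      · rw [he_A (x ⊔ y) hz]
        refine le_antisymm ?_ (sup_le (hle_f x hx ⟨x ⊔ y, hz⟩ le_sup_left)
          (hle_f y hy ⟨x ⊔ y, hz⟩ le_sup_right))
        exact (hK x hx y hy ⟨x ⊔ y, hz⟩ le_rfl).trans hdxy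
      · rw [he_nA (x ⊔ y) hz]
        refine le_antisymm ?_ (sup_le
          ((he_le_dx x hx).trans (h_dx_mono x (x ⊔ y) le_sup_left))
          ((he_le_dx y hy).trans (h_dx_mono y (x ⊔ y) le_sup_right)))
        exact h_dx_le (x ⊔ y) _ hs_exy
          (fun a' ha' => (hK x hx y hy a' ha').trans hdxy)
  -- recurse
  have hss : A'ᶜ ⊂ Aᶜ := by
    constructor
    · exact Set.compl_subset_compl.2 hAsub
    · intro hcon
      exact (hcon hb) hbA'
  have hlt : A'ᶜ.ncard < Aᶜ.ncard := Set.ncard_lt_ncard hss (Set.toFinite _)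
  obtain ⟨g, hg1, hg2⟩ := ih (A'ᶜ.ncard) (lt_of_lt_of_le hlt hcard) A' hsup' le_rfl
    ⟨b, hbA'⟩ (fun z : A' => e z) (fun u v => hhom u u.2 v v.2)
  refine ⟨g, hg1, fun a => ?_⟩
  have h1 := hg2 ⟨(a : B), hAsub a.2⟩
  rw [h1, he_A (a : B) a.2]

/-- Finite injectivity for distributive semilattices: if `A` is a subsemilattice of a
finite join-semilattice `B` and `S` is a distributive join-semilattice, then every
join-homomorphism `f : A → S` extends to a join-homomorphism `g : B → S`. -/
theorem stmt17 (S B : Type*) [SemilatticeSup S] [SemilatticeSup B] [Fintype B]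
    (hdist : ∀ a b₀ b₁ : S, a ≤ b₀ ⊔ b₁ →
      ∃ a₀ a₁ : S, a = a₀ ⊔ a₁ ∧ a₀ ≤ b₀ ∧ a₁ ≤ b₁)
    (A : Set B) (hA_ne : A.Nonempty)
    (hA_sup : ∀ x ∈ A, ∀ y ∈ A, x ⊔ y ∈ A)
    (f : A → S)
    (hf : ∀ a b : A, f ⟨(a : B) ⊔ (b : B), hA_sup a a.2 b b.2⟩ = f a ⊔ f b) :
    ∃ g : B → S, (∀ x y : B, g (x ⊔ y) = g x ⊔ g y) ∧ ∀ a : A, g (a : B) = f a :=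
  aux17 S B hdist (Aᶜ.ncard) A hA_sup le_rfl hA_ne f hf
end
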